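/- arXiv:2108.06402 — 6 statements merged into one kernel-verified Lean document; each statement's English description precedes it below -/
import Mathlib

section
/- Fix g₁, g₂ ∈ E₊(𝔣) generating a free rank-2 finite-index subgroup of E₊(𝔣), let i ∈ {1,2} and let l ≥ 1 be an integer. Suppose the real number Dᵢ := (2·g_i(2)^l − g_i(1)^l − g_i(3)^l)·log g₂(1) − (2·g_i(1)^l − g_i(2)^l − g_i(3)^l)·log g₂(2) is nonzero. Then, noting that x_{i,l}(0) = y_{i,l}(0) = 0, the slope of the curve 𝒞_{i,l} at t = 0 satisfies lim_{t→0⁺} y_{i,l}(t)/x_{i,l}(t) = −[(2·g_i(2)^l − g_i(1)^l − g_i(3)^l)·log g₁(1) − (2·g_i(1)^l − g_i(2)^l − g_i(3)^l)·log g₁(2)] / Dᵢ. -/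
noncomputable section

open Filter Set

/-- `ℝ³`, the target of the embedding of the totally real cubic field `F`
via its three real embeddings. -/
abbrev V3 := Fin 3 → ℝ

/-- All coordinates positive (totally positive). -/
def IsPos (x : V3) : Prop := ∀ i, 0 < x i

/-- Coordinatewise logarithm `Log`. -/
def Log3 (x : V3) : V3 := fun i => Real.log (x i)

/-- `l_i(M)`: the vector in the trace-zero hyperplane with entry `M` in place `i`
and `-M/2` in the other places. -/
def lvec (i : Fin 3) (M : ℝ) : V3 := fun j => if j = i then M else -M / 2

/-- `δ(x₁,x₂,x₃)`: sign of the determinant of the matrix with columns `x₁, x₂, x₃`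
(with `sign 0 = 0`). -/
def delta3 (x₁ x₂ x₃ : V3) : ℝ :=
  Real.sign (Matrix.det (Matrix.of fun i j : Fin 3 => ![x₁ i, x₂ i, x₃ i] j))

/-- `δ([x ∣ y]) = δ(1, x, x·y)`. -/
def deltaB (x y : V3) : ℝ := delta3 1 x (x * y)

/-- Projection `z ↦ z_ℋ = (z₁z₂z₃)^(-1/3)·z`. -/
def projH (x : V3) : V3 := fun i => (x 0 * x 1 * x 2) ^ (-(1 / 3) : ℝ) * x i

/-- Abstraction of `E₊(𝔣)`: a group of totally positive vectors of norm one whose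
`Log`-image is a full lattice in the trace-zero hyperplane `ℋ`. -/
def IsUnitLattice (E : Subgroup V3ˣ) : Prop :=
  (∀ u ∈ E, IsPos (u : V3)) ∧
  (∀ u ∈ E, Log3 (u : V3) 0 + Log3 (u : V3) 1 + Log3 (u : V3) 2 = 0) ∧
  ∃ u ∈ E, ∃ v ∈ E, LinearIndependent ℝ ![Log3 (u : V3), Log3 (v : V3)] ∧
    ∀ w ∈ E, ∃ m n : ℤ, Log3 (w : V3) = (m : ℝ) • Log3 (u : V3) + (n : ℝ) • Log3 (v : V3)

/-- `⟨g₁, g₂⟩` is a subgroup of `E`, free of rank `2` and of finite index in `E`. -/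
def FreeRank2FinIndex (E : Subgroup V3ˣ) (g₁ g₂ : V3ˣ) : Prop :=
  g₁ ∈ E ∧ g₂ ∈ E ∧
  (∀ m n : ℤ, g₁ ^ m * g₂ ^ n = 1 → m = 0 ∧ n = 0) ∧
  (Subgroup.closure {g₁, g₂}).relIndex E ≠ 0

/-- Open simplicial cone on one generator (a ray). -/
def cone1 (v : V3) : Set V3 := {x | ∃ c : ℝ, 0 < c ∧ x = c • v}

/-- Open simplicial cone on two generators. -/
def cone2 (v w : V3) : Set V3 := {x | ∃ c d : ℝ, 0 < c ∧ 0 < d ∧ x = c • v + d • w}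

/-- Open simplicial cone on three generators. -/
def cone3 (v w z : V3) : Set V3 :=
  {x | ∃ c d e : ℝ, 0 < c ∧ 0 < d ∧ 0 < e ∧ x = c • v + d • w + e • z}

/-- `C([x ∣ y]) = C(1, x, x·y)`. -/
def coneB (x y : V3) : Set V3 := cone3 1 x (x * y)

/-- The first standard basis vector of `ℝ³`. -/
def eOne : V3 := ![1, 0, 0]

/-- `C̄_{e₁}`-operation: the points of `ℝ³` brought into `S` by every sufficiently
small perturbation by `e₁`. -/
def closE1 (S : Set V3) : Set V3 :=
  {x | ∃ ε : ℝ, 0 < ε ∧ ∀ h : ℝ, 0 < h → h < ε → x + h • eOne ∈ S}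

/-- `C̄_{e₁}([x ∣ y])`. -/
def coneBbar (x y : V3) : Set V3 := closE1 (coneB x y)

/-- Multiplicative translate `v·S` of a subset of `ℝ³` (coordinatewise product). -/
def mulSet (v : V3) (S : Set V3) : Set V3 := (fun x => v * x) '' S

/-- The coordinates of `Log(α_ℋ)`. -/
def logHc (α : V3) (i : Fin 3) : ℝ :=
  Real.log (α i) - (Real.log (α 0) + Real.log (α 1) + Real.log (α 2)) / 3

/-- The projection `φ_{(g₁,g₂)} : ℝ₊³ → ℝ²`, given by the coordinates of `Log(α_ℋ)`
in the basis `(Log g₁, Log g₂)` of `ℋ` (the explicit formula of the paper). -/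
def phi (g₁ g₂ α : V3) : ℝ × ℝ :=
  ((logHc α 1 * Real.log (g₂ 0) - logHc α 0 * Real.log (g₂ 1)) /
      (Real.log (g₂ 0) * Real.log (g₁ 1) - Real.log (g₂ 1) * Real.log (g₁ 0)),
    (logHc α 1 * Real.log (g₁ 0) - logHc α 0 * Real.log (g₁ 1)) /
      (Real.log (g₁ 0) * Real.log (g₂ 1) - Real.log (g₁ 1) * Real.log (g₂ 0)))

/-- The straight segment `L(t)` from `(1,1,1)` to `v`. -/
def seg (v : V3) (t : ℝ) : V3 := fun j => 1 + t * (v j - 1)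

/-- `x_{i,l}(t)`: first coordinate of `𝒞_{i,l}(t) = φ_{(g₁,g₂)}(L_{i,l}(t))`,
where `g` is `g₁` or `g₂`. -/
def xC (g₁ g₂ g : V3) (l : ℕ) (t : ℝ) : ℝ := (phi g₁ g₂ (seg (g ^ l) t)).1

/-- `y_{i,l}(t)`: second coordinate of `𝒞_{i,l}(t)`. -/
def yC (g₁ g₂ g : V3) (l : ℕ) (t : ℝ) : ℝ := (phi g₁ g₂ (seg (g ^ l) t)).2

/-- The Colmez domain `ℬ = C̄_{e₁}([ε₁∣ε₂]) ∪ C̄_{e₁}([ε₂∣ε₁])`. -/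
def Bbar (ε₁ ε₂ : V3) : Set V3 := coneBbar ε₁ ε₂ ∪ coneBbar ε₂ ε₁

/-- The explicit cone decomposition of `ℬ` with chosen boundary cones. -/
def BsetC (ε₁ ε₂ : V3) : Set V3 :=
  cone1 1 ∪ cone2 1 ε₁ ∪ cone2 1 ε₂ ∪ cone2 1 (ε₁ * ε₂) ∪
    cone3 1 ε₁ (ε₁ * ε₂) ∪ cone3 1 ε₂ (ε₁ * ε₂)

/-- The explicit cone decomposition of `ℬ₁`. -/
def B1setC (ε₂ π : V3) : Set V3 :=
  cone1 π ∪ cone2 π (ε₂ * π) ∪ cone2 1 π ∪ cone2 1 (ε₂ * π) ∪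
    cone3 1 ε₂ (ε₂ * π) ∪ cone3 1 π (ε₂ * π)

/-- The explicit cone decomposition of `ℬ₂`. -/
def B2setC (ε₁ π : V3) : Set V3 :=
  cone1 π ∪ cone2 π (ε₁ * π) ∪ cone2 1 π ∪ cone2 1 (ε₁ * π) ∪
    cone3 1 ε₁ (ε₁ * π) ∪ cone3 1 π (ε₁ * π)

/-!
Since `L(0) = (1,1,1)` and `φ` kills the diagonal, both coordinates of `𝒞` vanish at `t = 0`, so
the slope is the quotient of their derivatives at `0`. The derivative of `Log (L(t)_ℋ)` at `0` is
the projection `v - (v₁+v₂+v₃)/3 · (1,1,1)` of `v = g_i^l` to `ℋ`. The two coordinates of `φ` are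
linear forms in `Log (α_ℋ)` divided by `±d`, with `d` a `2 × 2` minor of `(Log g₁, Log g₂)`, so `d`
cancels in the quotient once it is nonzero. It is, because `Log g₁, Log g₂` are linearly
independent in `ℋ`: a real relation between two integer combinations of a basis of the unit
lattice forces an integer one, i.e. a relation `g₁^p g₂^q = 1`.
-/

open Topology

theorem LinearIndependent.pair_of_intCast_combinations {K M : Type*} [Field K] [CharZero K]
    [AddCommGroup M] [Module K M] {u v w₁ w₂ : M} (huv : LinearIndependent K ![u, v])
    {m₁ n₁ m₂ n₂ : ℤ} (h₁ : w₁ = (m₁ : K) • u + (n₁ : K) • v)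
    (h₂ : w₂ = (m₂ : K) • u + (n₂ : K) • v)
    (hw : ∀ p q : ℤ, (p : K) • w₁ + (q : K) • w₂ = 0 → p = 0 ∧ q = 0) :
    LinearIndependent K ![w₁, w₂] := by
  by_cases hdet : m₁ * n₂ - m₂ * n₁ = 0
  · -- the rows of the adjugate of a singular coefficient matrix are integer relations
    have hdet' : (m₁ : K) * n₂ - m₂ * n₁ = 0 := by exact_mod_cast hdet
    obtain ⟨hn₂, hn₁⟩ := hw n₂ (-n₁) (by
      rw [h₁, h₂]; push_cast; linear_combination (norm := module) hdet' • u)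
    obtain ⟨hm₂, hm₁⟩ := hw m₂ (-m₁) (by
      rw [h₁, h₂]; push_cast; linear_combination (norm := module) -hdet' • v)
    obtain ⟨h1, -⟩ := hw 1 0 (by simp [h₁, show m₁ = 0 by omega, show n₁ = 0 by omega])
    exact absurd h1 one_ne_zero
  · have hdet' : (m₁ : K) * n₂ - m₂ * n₁ ≠ 0 := by exact_mod_cast hdet
    rw [LinearIndependent.pair_iff]
    intro s t hst
    obtain ⟨hu, hv⟩ := LinearIndependent.pair_iff.mp huv (s * m₁ + t * m₂) (s * n₁ + t * n₂)
      (by rw [← hst, h₁, h₂]; module)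
    constructor
    · refine (mul_eq_zero.mp (?_ : s * ((m₁ : K) * n₂ - m₂ * n₁) = 0)).resolve_right hdet'
      linear_combination (n₂ : K) * hu - (m₂ : K) * hv
    · refine (mul_eq_zero.mp (?_ : t * ((m₁ : K) * n₂ - m₂ * n₁) = 0)).resolve_right hdet'
      linear_combination (m₁ : K) * hv - (n₁ : K) * hu

theorem minor_ne_zero_of_linearIndependent {w₁ w₂ : V3} (h : LinearIndependent ℝ ![w₁, w₂])
    (h₁ : w₁ 0 + w₁ 1 + w₁ 2 = 0) (h₂ : w₂ 0 + w₂ 1 + w₂ 2 = 0) :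
    w₂ 0 * w₁ 1 - w₂ 1 * w₁ 0 ≠ 0 := by
  intro hd
  obtain ⟨-, hw₁₁⟩ := LinearIndependent.pair_iff.mp h (w₂ 1) (-w₁ 1) (by
    funext j; fin_cases j <;> simp only [Fin.zero_eta, Fin.mk_one, Fin.reduceFinMk, Pi.add_apply,
      Pi.smul_apply, smul_eq_mul, Pi.zero_apply]
    · linear_combination -hd
    · ring
    · linear_combination w₂ 1 * h₁ - w₁ 1 * h₂ + hd)
  obtain ⟨-, hw₁₀⟩ := LinearIndependent.pair_iff.mp h (w₂ 0) (-w₁ 0) (by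
    funext j; fin_cases j <;> simp only [Fin.zero_eta, Fin.mk_one, Fin.reduceFinMk, Pi.add_apply,
      Pi.smul_apply, smul_eq_mul, Pi.zero_apply]
    · ring
    · linear_combination hd
    · linear_combination w₂ 0 * h₁ - w₁ 0 * h₂ - hd)
  refine h.ne_zero 0 (funext fun j => ?_)
  fin_cases j <;> simp <;> linarith

def unitLog : V3ˣ →* Multiplicative V3 :=
  MonoidHom.mk' (fun u => .ofAdd (Log3 u)) fun u v => by
    funext i
    exact Real.log_mul ((u.isUnit.map (Pi.evalMonoidHom _ i)).ne_zero)
      ((v.isUnit.map (Pi.evalMonoidHom _ i)).ne_zero)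

theorem log3_zpow_mul_zpow (u v : V3ˣ) (p q : ℤ) :
    Log3 ((u ^ p * v ^ q : V3ˣ) : V3) = (p : ℝ) • Log3 u + (q : ℝ) • Log3 v := by
  change Multiplicative.toAdd (unitLog (u ^ p * v ^ q)) = _
  rw [map_mul, map_zpow, map_zpow, toAdd_mul, toAdd_zpow, toAdd_zpow, Int.cast_smul_eq_zsmul,
    Int.cast_smul_eq_zsmul]
  rfl

theorem log_minor_ne_zero {E : Subgroup V3ˣ} (hE : IsUnitLattice E) {g₁ g₂ : V3ˣ}
    (hfree : FreeRank2FinIndex E g₁ g₂) :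
    Real.log ((g₂ : V3) 0) * Real.log ((g₁ : V3) 1) -
      Real.log ((g₂ : V3) 1) * Real.log ((g₁ : V3) 0) ≠ 0 := by
  obtain ⟨hpos, htr, u, -, v, -, huv, hlat⟩ := hE
  obtain ⟨hg₁, hg₂, hrel, -⟩ := hfree
  obtain ⟨m₁, n₁, h₁⟩ := hlat g₁ hg₁
  obtain ⟨m₂, n₂, h₂⟩ := hlat g₂ hg₂
  refine minor_ne_zero_of_linearIndependent
    (huv.pair_of_intCast_combinations h₁ h₂ fun p q hpq => hrel p q ?_) (htr g₁ hg₁) (htr g₂ hg₂)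
  have hmem : g₁ ^ p * g₂ ^ q ∈ E := E.mul_mem (E.zpow_mem hg₁ p) (E.zpow_mem hg₂ q)
  ext i
  refine Real.eq_one_of_pos_of_log_eq_zero (hpos _ hmem i) ?_
  exact congrFun ((log3_zpow_mul_zpow g₁ g₂ p q).trans hpq) i

theorem tendsto_div_of_hasDerivAt {f h : ℝ → ℝ} {f' h' a : ℝ} (hf : HasDerivAt f f' a)
    (hh : HasDerivAt h h' a) (hfa : f a = 0) (hha : h a = 0) (hh' : h' ≠ 0) :
    Tendsto (fun t => f t / h t) (𝓝[≠] a) (𝓝 (f' / h')) := by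
  refine ((hasDerivAt_iff_tendsto_slope.mp hf).div (hasDerivAt_iff_tendsto_slope.mp hh) hh').congr'
    (eventually_nhdsWithin_of_forall fun t ht => ?_)
  have ht : t - a ≠ 0 := sub_ne_zero.mpr ht
  simp only [Pi.div_apply, slope_def_field, hfa, hha, sub_zero]
  exact div_div_div_cancel_right₀ ht _ _

theorem hasDerivAt_logHc_seg (v : V3) (i : Fin 3) :
    HasDerivAt (fun t => logHc (seg v t) i) (v i - (v 0 + v 1 + v 2) / 3) 0 := by
  have hlog (j : Fin 3) : HasDerivAt (fun t => Real.log (seg v t j)) (v j - 1) 0 := by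
    have hseg : HasDerivAt (fun t => seg v t j) (v j - 1) 0 := by
      simpa [seg] using ((hasDerivAt_id (0 : ℝ)).mul_const (v j - 1)).const_add 1
    simpa [seg] using hseg.log (by simp [seg])
  exact ((hlog i).sub ((((hlog 0).add (hlog 1)).add (hlog 2)).div_const 3)).congr_deriv (by ring)

theorem logHc_seg_zero (v : V3) (i : Fin 3) : logHc (seg v 0) i = 0 := by
  simp [logHc, seg]

theorem phi_snd_div_phi_fst (g₁ g₂ α : V3)
    (hd : Real.log (g₂ 0) * Real.log (g₁ 1) - Real.log (g₂ 1) * Real.log (g₁ 0) ≠ 0) :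
    (phi g₁ g₂ α).2 / (phi g₁ g₂ α).1 =
      -((logHc α 1 * Real.log (g₁ 0) - logHc α 0 * Real.log (g₁ 1)) /
        (logHc α 1 * Real.log (g₂ 0) - logHc α 0 * Real.log (g₂ 1))) := by
  simp only [phi]
  rw [show Real.log (g₁ 0) * Real.log (g₂ 1) - Real.log (g₁ 1) * Real.log (g₂ 0) =
      -(Real.log (g₂ 0) * Real.log (g₁ 1) - Real.log (g₂ 1) * Real.log (g₁ 0)) by ring,
    div_neg, neg_div, div_div_div_cancel_right₀ hd]

theorem stmt3_general (E : Subgroup V3ˣ) (hE : IsUnitLattice E) (g₁ g₂ : V3ˣ)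
    (hfree : FreeRank2FinIndex E g₁ g₂) (g : V3) (l : ℕ)
    (hD : (2 * g 1 ^ l - g 0 ^ l - g 2 ^ l) * Real.log ((g₂ : V3) 0) -
        (2 * g 0 ^ l - g 1 ^ l - g 2 ^ l) * Real.log ((g₂ : V3) 1) ≠ 0) :
    Filter.Tendsto
      (fun t : ℝ => yC (g₁ : V3) (g₂ : V3) g l t / xC (g₁ : V3) (g₂ : V3) g l t)
      (nhdsWithin 0 (Set.Ioi 0))
      (nhds (-(((2 * g 1 ^ l - g 0 ^ l - g 2 ^ l) * Real.log ((g₁ : V3) 0) -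
          (2 * g 0 ^ l - g 1 ^ l - g 2 ^ l) * Real.log ((g₁ : V3) 1)) /
        ((2 * g 1 ^ l - g 0 ^ l - g 2 ^ l) * Real.log ((g₂ : V3) 0) -
          (2 * g 0 ^ l - g 1 ^ l - g 2 ^ l) * Real.log ((g₂ : V3) 1))))) := by
  let v := g ^ l
  have hderiv (c₀ c₁ : ℝ) := ((hasDerivAt_logHc_seg v 1).mul_const c₀).sub
    ((hasDerivAt_logHc_seg v 0).mul_const c₁)
  have hzero (c₀ c₁ : ℝ) : logHc (seg v 0) 1 * c₀ - logHc (seg v 0) 0 * c₁ = 0 := by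
    simp [logHc_seg_zero]
  have hden : (v 1 - (v 0 + v 1 + v 2) / 3) * Real.log ((g₂ : V3) 0) -
      (v 0 - (v 0 + v 1 + v 2) / 3) * Real.log ((g₂ : V3) 1) ≠ 0 := by
    simp only [v, Pi.pow_apply]; contrapose! hD; linear_combination 3 * hD
  have hslope := (tendsto_div_of_hasDerivAt
    (hderiv (Real.log ((g₁ : V3) 0)) (Real.log ((g₁ : V3) 1))) (hderiv _ _)
    (hzero _ _) (hzero _ _) hden).neg
  refine ((hslope.mono_left (nhdsGT_le_nhdsNE 0)).congr fun t =>
    (phi_snd_div_phi_fst _ _ _ (log_minor_ne_zero hE hfree)).symm).trans_eq (congrArg 𝓝 ?_)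
  rw [neg_inj, div_eq_div_iff hden hD]
  simp only [v, Pi.pow_apply]
  ring

/-- the slope of the curve `𝒞_{i,l}` at `t = 0`. -/
theorem stmt3 (E : Subgroup V3ˣ) (hE : IsUnitLattice E) (g₁ g₂ : V3ˣ)
    (hfree : FreeRank2FinIndex E g₁ g₂) (g : V3)
    (hg : g = (g₁ : V3) ∨ g = (g₂ : V3)) (l : ℕ) (hl : 1 ≤ l)
    (hD : (2 * g 1 ^ l - g 0 ^ l - g 2 ^ l) * Real.log ((g₂ : V3) 0) -
        (2 * g 0 ^ l - g 1 ^ l - g 2 ^ l) * Real.log ((g₂ : V3) 1) ≠ 0) :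
    Filter.Tendsto
      (fun t : ℝ => yC (g₁ : V3) (g₂ : V3) g l t / xC (g₁ : V3) (g₂ : V3) g l t)
      (nhdsWithin 0 (Set.Ioi 0))
      (nhds (-(((2 * g 1 ^ l - g 0 ^ l - g 2 ^ l) * Real.log ((g₁ : V3) 0) -
          (2 * g 0 ^ l - g 1 ^ l - g 2 ^ l) * Real.log ((g₁ : V3) 1)) /
        ((2 * g 1 ^ l - g 0 ^ l - g 2 ^ l) * Real.log ((g₂ : V3) 0) -
          (2 * g 0 ^ l - g 1 ^ l - g 2 ^ l) * Real.log ((g₂ : V3) 1))))) :=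
  stmt3_general E hE g₁ g₂ hfree g l hD
end
end

section
/- Let a₁, a₂, b₁, b₂ be positive real numbers with a₂ > a₁⁻² > a₁⁻¹ > 1 and b₁ < b₂ < 1, and set a₃ = (a₁a₂)⁻¹ and b₃ = (b₁b₂)⁻¹. Then, as l → ∞ through the positive integers: (1) −[(2a₂^l − a₁^l − a₃^l)·log a₁ − (2a₁^l − a₂^l − a₃^l)·log a₂] / [(2a₂^l − a₁^l − a₃^l)·log b₁ − (2a₁^l − a₂^l − a₃^l)·log b₂] converges to −(2·log a₁ + log a₂)/(2·log b₁ + log b₂), and this limit is strictly positive; (2) −[(2a₂^{−l} − a₁^{−l} − a₃^{−l})·log a₁ − (2a₁^{−l} − a₂^{−l} − a₃^{−l})·log a₂] / [(2a₂^{−l} − a₁^{−l} − a₃^{−l})·log b₁ − (2a₁^{−l} − a₂^{−l} − a₃^{−l})·log b₂] converges to −(−log a₁ + log a₂)/(−log b₁ + log b₂), and this limit is strictly negative. -/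
/-!
Each coefficient `2 aᵢ^l - aⱼ^l - a₃^l` is a combination of `l`-th powers, so after dividing
numerator and denominator by the `l`-th power of the largest base only the coefficients of that
power survive. For `l → ∞` the largest of `a₁, a₂, a₃` is `a₂`, giving the limit coefficients
`(2, -1)`; for `l → -∞` it is `a₃⁻¹ = a₁a₂`, giving `(-1, -1)`. The signs of the limits follow
from `a₁ < 1 < a₁⁻¹ < a₁a₂`, `a₁⁻² < a₂` and `b₁ < b₂ < 1` after taking logarithms.
-/

open Filter Topology Real

theorem tendsto_pow_div_pow_of_lt {x z : ℝ} (hx : 0 ≤ x) (hxz : x < z) :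
    Tendsto (fun l : ℕ => x ^ l / z ^ l) atTop (𝓝 0) := by
  have hz : 0 < z := hx.trans_lt hxz
  simpa only [div_pow] using
    tendsto_pow_atTop_nhds_zero_of_lt_one (div_nonneg hx hz.le) ((div_lt_one hz).2 hxz)

theorem tendsto_pow_comb_div_pow_of_lt {x y z : ℝ} (hx : 0 ≤ x) (hy : 0 ≤ y) (hxz : x < z)
    (hyz : y < z) (p q r : ℝ) :
    Tendsto (fun l : ℕ => (p * z ^ l + q * x ^ l + r * y ^ l) / z ^ l) atTop (𝓝 p) := by
  have hz : 0 < z := hx.trans_lt hxz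
  have hlim := (tendsto_const_nhds (x := p)).add
    (((tendsto_pow_div_pow_of_lt hx hxz).const_mul q).add
      ((tendsto_pow_div_pow_of_lt hy hyz).const_mul r))
  rw [mul_zero, mul_zero, add_zero, add_zero] at hlim
  refine hlim.congr fun l => ?_
  field_simp [(pow_pos hz l).ne']
  ring

theorem tendsto_neg_div_of_tendsto_div {ι : Type*} {F : Filter ι} {α₁ α₂ β₁ β₂ U V : ℝ}
    {u v c : ι → ℝ} (hc : ∀ᶠ i in F, c i ≠ 0) (hu : Tendsto (fun i => u i / c i) F (𝓝 U))
    (hv : Tendsto (fun i => v i / c i) F (𝓝 V)) (hden : U * β₁ - V * β₂ ≠ 0) :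
    Tendsto (fun i => -((u i * α₁ - v i * α₂) / (u i * β₁ - v i * β₂))) F
      (𝓝 (-((U * α₁ - V * α₂) / (U * β₁ - V * β₂)))) := by
  have hlim := (((hu.mul_const α₁).sub (hv.mul_const α₂)).div
    ((hu.mul_const β₁).sub (hv.mul_const β₂)) hden).neg
  refine hlim.congr' (hc.mono fun i hci => ?_)
  simp only [Pi.div_apply]
  rw [div_mul_eq_mul_div, div_mul_eq_mul_div, div_mul_eq_mul_div, div_mul_eq_mul_div,
    ← sub_div, ← sub_div, div_div_div_cancel_right₀ hci]

theorem stmt5_general (a₁ a₂ b₁ b₂ : ℝ) (hb₁ : 0 < b₁)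
    (ha : a₂ > (a₁⁻¹) ^ 2) (ha'' : a₁⁻¹ > 1)
    (hb : b₁ < b₂) (hb' : b₂ < 1) :
    (Filter.Tendsto (fun l : ℕ =>
        -(((2 * a₂ ^ l - a₁ ^ l - ((a₁ * a₂)⁻¹) ^ l) * Real.log a₁ -
              (2 * a₁ ^ l - a₂ ^ l - ((a₁ * a₂)⁻¹) ^ l) * Real.log a₂) /
          ((2 * a₂ ^ l - a₁ ^ l - ((a₁ * a₂)⁻¹) ^ l) * Real.log b₁ -
              (2 * a₁ ^ l - a₂ ^ l - ((a₁ * a₂)⁻¹) ^ l) * Real.log b₂)))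
        Filter.atTop
        (nhds (-((2 * Real.log a₁ + Real.log a₂) / (2 * Real.log b₁ + Real.log b₂)))) ∧
      0 < -((2 * Real.log a₁ + Real.log a₂) / (2 * Real.log b₁ + Real.log b₂))) ∧
    (Filter.Tendsto (fun l : ℕ =>
        -(((2 * (a₂ ^ l)⁻¹ - (a₁ ^ l)⁻¹ - (((a₁ * a₂)⁻¹) ^ l)⁻¹) * Real.log a₁ -
              (2 * (a₁ ^ l)⁻¹ - (a₂ ^ l)⁻¹ - (((a₁ * a₂)⁻¹) ^ l)⁻¹) * Real.log a₂) /
          ((2 * (a₂ ^ l)⁻¹ - (a₁ ^ l)⁻¹ - (((a₁ * a₂)⁻¹) ^ l)⁻¹) * Real.log b₁ -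
              (2 * (a₁ ^ l)⁻¹ - (a₂ ^ l)⁻¹ - (((a₁ * a₂)⁻¹) ^ l)⁻¹) * Real.log b₂)))
        Filter.atTop
        (nhds (-((-Real.log a₁ + Real.log a₂) / (-Real.log b₁ + Real.log b₂)))) ∧
      -((-Real.log a₁ + Real.log a₂) / (-Real.log b₁ + Real.log b₂)) < 0) := by
  have ha₁ : 0 < a₁ := inv_pos.mp (one_pos.trans ha'')
  have ha₁_lt_one : a₁ < 1 := (one_lt_inv₀ ha₁).mp ha''
  have ha₂ : 1 < a₂ := (one_lt_pow₀ ha'' two_ne_zero).trans ha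
  have ha₁a₂ : a₁⁻¹ < a₁ * a₂ := by
    calc a₁⁻¹ = a₁ * a₁⁻¹ ^ 2 := by field_simp
      _ < a₁ * a₂ := mul_lt_mul_of_pos_left ha ha₁
  have hprod : 1 < a₁ * a₂ := ha''.trans ha₁a₂
  have hloga : 0 < 2 * log a₁ + log a₂ := by
    have h := log_lt_log (by positivity) ha
    rw [log_pow, log_inv] at h
    push_cast at h
    linarith
  have hlogb : log b₁ < log b₂ := log_lt_log hb₁ hb
  have hlogb₂ : log b₂ < 0 := log_neg (hb₁.trans hb) hb'
  refine ⟨⟨?_, ?_⟩, ?_, ?_⟩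
  · rw [show 2 * log a₁ + log a₂ = 2 * log a₁ - (-1) * log a₂ by ring,
      show 2 * log b₁ + log b₂ = 2 * log b₁ - (-1) * log b₂ by ring]
    apply tendsto_neg_div_of_tendsto_div (c := fun l : ℕ => a₂ ^ l)
      (Eventually.of_forall fun l => (pow_pos (one_pos.trans ha₂) l).ne')
    · exact (tendsto_pow_comb_div_pow_of_lt ha₁.le (by positivity) (ha₁_lt_one.trans ha₂)
        ((inv_lt_one_of_one_lt₀ hprod).trans ha₂) 2 (-1) (-1)).congr fun l => by ring
    · exact (tendsto_pow_comb_div_pow_of_lt ha₁.le (by positivity) (ha₁_lt_one.trans ha₂)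
        ((inv_lt_one_of_one_lt₀ hprod).trans ha₂) (-1) 2 (-1)).congr fun l => by ring
    · linarith
  · exact neg_pos.2 (div_neg_of_pos_of_neg hloga (by linarith))
  · rw [show -log a₁ + log a₂ = (-1) * log a₁ - (-1) * log a₂ by ring,
      show -log b₁ + log b₂ = (-1) * log b₁ - (-1) * log b₂ by ring]
    apply tendsto_neg_div_of_tendsto_div (c := fun l : ℕ => (a₁ * a₂) ^ l)
      (Eventually.of_forall fun l => (pow_pos (one_pos.trans hprod) l).ne')
    · exact (tendsto_pow_comb_div_pow_of_lt (by positivity) (by positivity) ha₁a₂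
        ((inv_lt_one_of_one_lt₀ ha₂).trans hprod) (-1) (-1) 2).congr fun l => by
        simp only [inv_pow, inv_inv]; ring
    · exact (tendsto_pow_comb_div_pow_of_lt (by positivity) (by positivity) ha₁a₂
        ((inv_lt_one_of_one_lt₀ ha₂).trans hprod) (-1) 2 (-1)).congr fun l => by
        simp only [inv_pow, inv_inv]; ring
    · linarith
  · exact neg_neg_iff_pos.2 (div_pos (by linarith [log_neg ha₁ ha₁_lt_one, log_pos ha₂])
      (by linarith))

/-- limits, as `l → ∞`, of the slopes of the curve `𝒞_{1,l}` at
`t = 0` and `t = 1`, where `a_j = σ_j(g₁)`, `b_j = σ_j(g₂)`,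
`a₃ = (a₁a₂)⁻¹` and `b₃ = (b₁b₂)⁻¹`. -/
theorem stmt5 (a₁ a₂ b₁ b₂ : ℝ) (ha₁ : 0 < a₁) (ha₂ : 0 < a₂) (hb₁ : 0 < b₁)
    (hb₂ : 0 < b₂) (ha : a₂ > (a₁⁻¹) ^ 2) (ha' : (a₁⁻¹) ^ 2 > a₁⁻¹) (ha'' : a₁⁻¹ > 1)
    (hb : b₁ < b₂) (hb' : b₂ < 1) :
    (Filter.Tendsto (fun l : ℕ =>
        -(((2 * a₂ ^ l - a₁ ^ l - ((a₁ * a₂)⁻¹) ^ l) * Real.log a₁ -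
              (2 * a₁ ^ l - a₂ ^ l - ((a₁ * a₂)⁻¹) ^ l) * Real.log a₂) /
          ((2 * a₂ ^ l - a₁ ^ l - ((a₁ * a₂)⁻¹) ^ l) * Real.log b₁ -
              (2 * a₁ ^ l - a₂ ^ l - ((a₁ * a₂)⁻¹) ^ l) * Real.log b₂)))
        Filter.atTop
        (nhds (-((2 * Real.log a₁ + Real.log a₂) / (2 * Real.log b₁ + Real.log b₂)))) ∧
      0 < -((2 * Real.log a₁ + Real.log a₂) / (2 * Real.log b₁ + Real.log b₂))) ∧
    (Filter.Tendsto (fun l : ℕ =>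
        -(((2 * (a₂ ^ l)⁻¹ - (a₁ ^ l)⁻¹ - (((a₁ * a₂)⁻¹) ^ l)⁻¹) * Real.log a₁ -
              (2 * (a₁ ^ l)⁻¹ - (a₂ ^ l)⁻¹ - (((a₁ * a₂)⁻¹) ^ l)⁻¹) * Real.log a₂) /
          ((2 * (a₂ ^ l)⁻¹ - (a₁ ^ l)⁻¹ - (((a₁ * a₂)⁻¹) ^ l)⁻¹) * Real.log b₁ -
              (2 * (a₁ ^ l)⁻¹ - (a₂ ^ l)⁻¹ - (((a₁ * a₂)⁻¹) ^ l)⁻¹) * Real.log b₂)))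
        Filter.atTop
        (nhds (-((-Real.log a₁ + Real.log a₂) / (-Real.log b₁ + Real.log b₂)))) ∧
      -((-Real.log a₁ + Real.log a₂) / (-Real.log b₁ + Real.log b₂)) < 0) :=
  stmt5_general a₁ a₂ b₁ b₂ hb₁ ha ha'' hb hb'
end

section
/- There exists R′ > 0 with the following property: for all r > R′ and M > 2⁵·r, if g₁, g₂ ∈ E₊(𝔣) generate a free rank-2 finite-index subgroup of E₊(𝔣) and Log(g_i) ∈ B(l_i(M), r) for i = 1,2, then for every integer l ≥ 1: (1) ⟨g₁^l, g₂^l⟩ is a free subgroup of E₊(𝔣) of rank 2 and of finite index; (2) δ([g₁^l | g₂^l]) = −δ([g₂^l | g₁^l]) = 1. -/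
/-
Put `a = l • Log g₁` and `b = l • Log g₂`. Expanding the determinant, `δ([g₁^l | g₂^l])` is the
sign of a sum of six terms `± exp (a i + a j + b k)`. Since `a` and `b` lie within `l r` of
`l₁(l M)` and `l₂(l M)`, the exponent of the positive term `a 1 + a 2 + b 2` exceeds each of the
three negative exponents by at least `2`, and `3 < e²`. Exchanging the second and third coordinates
negates `δ` and exchanges the roles of `g₁` and `g₂`, which gives the second sign. The group
`⟨g₁^l, g₂^l⟩` is the image of `⟨g₁, g₂⟩` under `x ↦ x^l`, which has finite index in any finitely
generated commutative group.
-/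

noncomputable section

open Filter Set

open Metric

lemma Real.exp_add_exp_add_exp_lt_exp {t₁ t₂ t₃ s : ℝ} (h₁ : t₁ + 2 ≤ s) (h₂ : t₂ + 2 ≤ s)
    (h₃ : t₃ + 2 ≤ s) : Real.exp t₁ + Real.exp t₂ + Real.exp t₃ < Real.exp s := by
  have hle : ∀ t, t + 2 ≤ s → Real.exp t ≤ Real.exp (s - 2) := fun t ht =>
    Real.exp_le_exp.mpr (by linarith)
  have h3 : (3 : ℝ) < Real.exp 2 := by linarith [Real.add_one_lt_exp (two_ne_zero (α := ℝ))]
  calc Real.exp t₁ + Real.exp t₂ + Real.exp t₃ ≤ 3 * Real.exp (s - 2) := by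
        linarith [hle _ h₁, hle _ h₂, hle _ h₃]
    _ < Real.exp 2 * Real.exp (s - 2) := by gcongr
    _ = Real.exp s := by rw [← Real.exp_add]; ring_nf

lemma deltaB_eq_sign (x y : V3) :
    deltaB x y = Real.sign (x 1 * x 2 * (y 2 - y 1) + x 0 * x 2 * (y 0 - y 2)
      + x 0 * x 1 * (y 1 - y 0)) := by
  unfold deltaB delta3
  congr 1
  simp [Matrix.det_fin_three]
  ring

lemma deltaB_comp_swap (x y : V3) :
    deltaB (x ∘ Equiv.swap 1 2) (y ∘ Equiv.swap 1 2) = -deltaB x y := by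
  rw [deltaB_eq_sign, deltaB_eq_sign, ← Real.sign_neg]
  congr 1
  simp [Equiv.swap_apply_of_ne_of_ne]
  ring

lemma deltaB_exp_eq_one {a b : V3} (h₁ : a 0 + 2 ≤ a 1) (h₂ : b 1 + 2 ≤ b 2)
    (h₃ : a 0 + b 0 + 2 ≤ a 2 + b 2) :
    deltaB (fun i => Real.exp (a i)) (fun i => Real.exp (b i)) = 1 := by
  rw [deltaB_eq_sign]
  apply Real.sign_of_pos
  have hdom := Real.exp_add_exp_add_exp_lt_exp (t₁ := a 1 + a 2 + b 1) (t₂ := a 0 + a 2 + b 2)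
    (t₃ := a 0 + a 1 + b 0) (s := a 1 + a 2 + b 2) (by linarith) (by linarith) (by linarith)
  simp only [mul_sub, ← Real.exp_add] at hdom ⊢
  linarith [Real.exp_pos (a 0 + a 2 + b 0), Real.exp_pos (a 0 + a 1 + b 1)]

lemma deltaB_exp_eq_neg_one {a b : V3} (h₁ : a 2 + 2 ≤ a 1) (h₂ : b 0 + 2 ≤ b 2)
    (h₃ : a 0 + b 0 + 2 ≤ a 1 + b 1) :
    deltaB (fun i => Real.exp (b i)) (fun i => Real.exp (a i)) = -1 := by
  have h := deltaB_exp_eq_one (a := b ∘ Equiv.swap 1 2) (b := a ∘ Equiv.swap 1 2)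
    (by simpa [Equiv.swap_apply_of_ne_of_ne] using h₂)
    (by simpa using h₁)
    (by simpa [Equiv.swap_apply_of_ne_of_ne, add_comm] using h₃)
  rw [← neg_neg (deltaB _ _), ← deltaB_comp_swap]
  exact congrArg Neg.neg h

lemma exp_Log3 {x : V3} (hx : IsPos x) : (fun i => Real.exp (Log3 x i)) = x :=
  funext fun i => Real.exp_log (hx i)

lemma Log3_pow (x : V3) (n : ℕ) : Log3 (x ^ n) = (n : ℝ) • Log3 x :=
  funext fun i => Real.log_pow (x i) n

lemma lvec_mul (i : Fin 3) (c M : ℝ) : lvec i (c * M) = c • lvec i M := by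
  ext j
  by_cases h : j = i <;> simp [lvec, h]; ring

lemma smul_mem_ball_lvec {z : V3} {i : Fin 3} {M r c : ℝ} (hz : z ∈ ball (lvec i M) r)
    (hc : 0 < c) : c • z ∈ ball (lvec i (c * M)) (c * r) := by
  rw [mem_ball, lvec_mul, dist_smul₀, Real.norm_of_nonneg hc.le]
  exact mul_lt_mul_of_pos_left hz hc

lemma sub_lt_of_mem_ball_lvec {z : V3} {i : Fin 3} {M r : ℝ} (hz : z ∈ ball (lvec i M) r) :
    M - r < z i := by
  have h := (dist_le_pi_dist z (lvec i M) i).trans_lt hz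
  rw [Real.dist_eq, lvec, if_pos rfl] at h
  linarith [(abs_lt.mp h).1]

lemma abs_add_half_lt_of_mem_ball_lvec {z : V3} {i j : Fin 3} {M r : ℝ}
    (hz : z ∈ ball (lvec i M) r) (hj : j ≠ i) : |z j + M / 2| < r := by
  have h := (dist_le_pi_dist z (lvec i M) j).trans_lt hz
  rwa [Real.dist_eq, lvec, if_neg hj, sub_eq_add_neg, neg_div, neg_neg] at h

lemma deltaB_of_log_mem_ball {x y : V3} (hx : IsPos x) (hy : IsPos y) {r M : ℝ}
    (hrM : 8 * r + 4 ≤ 3 * M) (hx' : Log3 x ∈ ball (lvec 1 M) r)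
    (hy' : Log3 y ∈ ball (lvec 2 M) r) : deltaB x y = 1 ∧ deltaB y x = -1 := by
  have ha₁ := sub_lt_of_mem_ball_lvec hx'
  have hb₂ := sub_lt_of_mem_ball_lvec hy'
  obtain ⟨ha₀, ha₀'⟩ := abs_lt.mp (abs_add_half_lt_of_mem_ball_lvec hx' (j := 0) (by decide))
  obtain ⟨ha₂, ha₂'⟩ := abs_lt.mp (abs_add_half_lt_of_mem_ball_lvec hx' (j := 2) (by decide))
  obtain ⟨hb₀, hb₀'⟩ := abs_lt.mp (abs_add_half_lt_of_mem_ball_lvec hy' (j := 0) (by decide))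
  obtain ⟨hb₁, hb₁'⟩ := abs_lt.mp (abs_add_half_lt_of_mem_ball_lvec hy' (j := 1) (by decide))
  rw [← exp_Log3 hx, ← exp_Log3 hy]
  -- each required gap is at least `3 * M / 2 - 4 * r ≥ 2`
  exact ⟨deltaB_exp_eq_one (by linarith) (by linarith) (by linarith),
    deltaB_exp_eq_neg_one (by linarith) (by linarith) (by linarith)⟩

lemma deltaB_pow_of_log_mem_ball {x y : V3} (hx : IsPos x) (hy : IsPos y) {r M : ℝ}
    (hrM : 8 * r + 4 ≤ 3 * M) (hx' : Log3 x ∈ ball (lvec 1 M) r)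
    (hy' : Log3 y ∈ ball (lvec 2 M) r) {n : ℕ} (hn : 1 ≤ n) :
    deltaB (x ^ n) (y ^ n) = 1 ∧ deltaB (y ^ n) (x ^ n) = -1 := by
  have hn' : (1 : ℝ) ≤ n := by exact_mod_cast hn
  have hpow : ∀ {z : V3}, IsPos z → IsPos (z ^ n) := fun hz i => pow_pos (hz i) n
  refine deltaB_of_log_mem_ball (r := n * r) (M := n * M) (hpow hx) (hpow hy) ?_ ?_ ?_
  · nlinarith
  · rw [Log3_pow]; exact smul_mem_ball_lvec hx' (by positivity)
  · rw [Log3_pow]; exact smul_mem_ball_lvec hy' (by positivity)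

lemma Subgroup.relIndex_closure_pow_pair_ne_zero {G : Type*} [CommGroup G] (a b : G) {n : ℕ}
    (hn : n ≠ 0) : (closure {a ^ n, b ^ n}).relIndex (closure {a, b}) ≠ 0 := by
  have hfg : (closure {a, b}).FG := (Subgroup.fg_iff _).mpr ⟨_, rfl, Set.toFinite _⟩
  have h := isFiniteRelIndex_map_powMonoidHom_of_fg hfg hn
  rw [MonoidHom.map_closure, Set.image_pair] at h
  exact h.relIndex_ne_zero

lemma FreeRank2FinIndex.pow {E : Subgroup V3ˣ} {g₁ g₂ : V3ˣ} (h : FreeRank2FinIndex E g₁ g₂)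
    {n : ℕ} (hn : n ≠ 0) : FreeRank2FinIndex E (g₁ ^ n) (g₂ ^ n) := by
  obtain ⟨hg₁, hg₂, hfree, hindex⟩ := h
  refine ⟨pow_mem hg₁ n, pow_mem hg₂ n, fun m k hmk => ?_, ?_⟩
  · simp only [← zpow_natCast, ← zpow_mul] at hmk
    obtain ⟨hm, hk⟩ := hfree _ _ hmk
    exact ⟨by simpa [hn] using hm, by simpa [hn] using hk⟩
  · exact Subgroup.relIndex_ne_zero_trans
      (Subgroup.relIndex_closure_pow_pair_ne_zero g₁ g₂ hn) hindex

/-- Proposition 6.8 of the paper: powers of a well-chosen pair of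
units again generate a free rank-2 finite-index subgroup with the right signs. -/
theorem stmt7 (E : Subgroup V3ˣ) (hE : IsUnitLattice E) :
    ∃ R' : ℝ, 0 < R' ∧ ∀ r : ℝ, r > R' → ∀ M : ℝ, M > 2 ^ 5 * r →
      ∀ g₁ g₂ : V3ˣ, FreeRank2FinIndex E g₁ g₂ →
        Log3 (g₁ : V3) ∈ Metric.ball (lvec 1 M) r →
        Log3 (g₂ : V3) ∈ Metric.ball (lvec 2 M) r →
        ∀ l : ℕ, 1 ≤ l →
          FreeRank2FinIndex E (g₁ ^ l) (g₂ ^ l) ∧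
          deltaB ((g₁ : V3) ^ l) ((g₂ : V3) ^ l) = 1 ∧
          deltaB ((g₂ : V3) ^ l) ((g₁ : V3) ^ l) = -1 := by
  refine ⟨1, one_pos, fun r hr M hM g₁ g₂ hg hg₁ hg₂ l hl => ?_⟩
  exact ⟨hg.pow (by omega), deltaB_pow_of_log_mem_ball (hE.1 g₁ hg.1) (hE.1 g₂ hg.2.1)
    (by linarith) hg₁ hg₂ hl⟩
end
end

section
/- Suppose g₁, g₂ ∈ E₊(𝔣) generate a free rank-2 finite-index subgroup of E₊(𝔣), that δ([g₁^m | g₂^m]) = −δ([g₂^m | g₁^m]) = 1 for every integer m ≥ 1, and that σ₂(g₁) > σ₁(g₁)⁻² > σ₁(g₁)⁻¹ > 1 and σ₁(g₂) < σ₂(g₂) < 1. Then there exists L₁ > 0 such that for every integer l > L₁ and every t ∈ [0,1]: (i) y_{1,l}(t) ≥ 0; (ii) x_{2,l}(t) ≤ 0; (iii) 0 ≤ x_{1,l}(t) ≤ l; (iv) 0 ≤ y_{2,l}(t) ≤ l. -/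
noncomputable section

open Filter Set

/-!
In log coordinates the point at time `t` of the segment from `1` to `g ^ l` is `F ∘ Log g`
with `F ξ = log (1 + t (e^{lξ} - 1))`, a convex increasing function such that `lξ - F ξ` is
increasing as well. By Cramer's rule the two coordinates of `φ(α)` are quotients of triple
products `Log α ⬝ (1 × Log gⱼ)`. Bounds (i) and (ii) say that three points on the graph of a
convex function are positively oriented. For (iii) and (iv), the numerator is a combination of two
increments of `F` (for the lower bounds) or of `lξ - F ξ` (for the upper bounds), with
coefficients whose signs are fixed by the orderings `σ₃(g₁) < σ₁(g₁) < 1 < σ₂(g₁)` and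
`σ₁(g₂) < σ₂(g₂) < 1 < σ₃(g₂)`.
-/

open Matrix

def logSeg (t ξ : ℝ) : ℝ := Real.log (1 + t * (Real.exp ξ - 1))

section logSeg

variable {t : ℝ}

lemma one_add_mul_exp_sub_one_pos (ht : t ∈ Icc (0 : ℝ) 1) (ξ : ℝ) :
    0 < 1 + t * (Real.exp ξ - 1) := by
  nlinarith [ht.1, ht.2, Real.exp_pos ξ, mul_nonneg ht.1 (Real.exp_pos ξ).le]

lemma logSeg_monotone (ht : t ∈ Icc (0 : ℝ) 1) : Monotone (logSeg t) := fun _ _ h =>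
  Real.log_le_log (one_add_mul_exp_sub_one_pos ht _)
    (by gcongr; exact ht.1)

lemma hasDerivAt_logSeg (ht : t ∈ Icc (0 : ℝ) 1) (ξ : ℝ) :
    HasDerivAt (logSeg t) (t * Real.exp ξ / (1 + t * (Real.exp ξ - 1))) ξ := by
  have := (((Real.hasDerivAt_exp ξ).sub_const 1).const_mul t).const_add 1
  show HasDerivAt (fun ξ => Real.log (1 + t * (Real.exp ξ - 1))) _ ξ
  simpa using this.log (one_add_mul_exp_sub_one_pos ht ξ).ne'

lemma monotone_sub_logSeg (ht : t ∈ Icc (0 : ℝ) 1) : Monotone fun ξ => ξ - logSeg t ξ := by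
  have hd ξ : HasDerivAt (fun ξ => ξ - logSeg t ξ)
      (1 - t * Real.exp ξ / (1 + t * (Real.exp ξ - 1))) ξ :=
    (hasDerivAt_id' ξ).sub (hasDerivAt_logSeg ht ξ)
  refine monotone_of_deriv_nonneg (fun ξ => (hd ξ).differentiableAt) fun ξ => ?_
  rw [(hd ξ).deriv, sub_nonneg, div_le_one (one_add_mul_exp_sub_one_pos ht ξ)]
  linarith [ht.2]

lemma convexOn_logSeg (ht : t ∈ Icc (0 : ℝ) 1) : ConvexOn ℝ univ (logSeg t) := by
  refine Monotone.convexOn_univ_of_deriv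
    (fun ξ => (hasDerivAt_logSeg ht ξ).differentiableAt) fun ξ η hξη => ?_
  have hD := one_add_mul_exp_sub_one_pos ht
  rw [(hasDerivAt_logSeg ht ξ).deriv, (hasDerivAt_logSeg ht η).deriv,
    div_le_div_iff₀ (hD ξ) (hD η)]
  -- after cross-multiplying, the inequality reads `t (1 - t) e^ξ ≤ t (1 - t) e^η`
  have := Real.exp_le_exp.2 hξη
  nlinarith [mul_nonneg (mul_nonneg ht.1 (sub_nonneg.2 ht.2)) (sub_nonneg.2 this)]

end logSeg

lemma dotProduct_one_cross (u v : V3) :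
    u ⬝ᵥ (1 ⨯₃ v) = u 0 * (v 2 - v 1) + u 1 * (v 0 - v 2) + u 2 * (v 1 - v 0) := by
  simp only [cross_apply, dotProduct, Fin.sum_univ_three, Pi.one_apply, one_mul, cons_val_zero,
    cons_val_one, cons_val, mul_sub]

section ThreePoint

variable {F : ℝ → ℝ} {w v : V3}

lemma ConvexOn.dotProduct_comp_one_cross_nonneg (hF : ConvexOn ℝ univ F) (i : Fin 3)
    (h₁ : w i < w (i + 1)) (h₂ : w (i + 1) < w (i + 2)) : 0 ≤ (F ∘ w) ⬝ᵥ (1 ⨯₃ w) := by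
  have := hF.secant_mono_aux1 (mem_univ _) (mem_univ _) h₁ h₂
  rw [dotProduct_one_cross]
  fin_cases i <;> simp only [Fin.reduceFinMk, Fin.reduceAdd, Function.comp_apply] at this ⊢ <;>
    linarith

lemma Monotone.dotProduct_comp_one_cross_nonneg (hF : Monotone F) (i : Fin 3)
    (h₁ : w i ≤ w (i + 1)) (h₂ : w (i + 1) ≤ w (i + 2))
    (hv₁ : v i ≤ v (i + 1)) (hv₂ : v (i + 2) ≤ v (i + 1)) : 0 ≤ (F ∘ w) ⬝ᵥ (1 ⨯₃ v) := by
  have h₁₂ := mul_nonneg (sub_nonneg.2 hv₁) (sub_nonneg.2 (hF h₂))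
  have h₀₁ := mul_nonneg (sub_nonneg.2 hv₂) (sub_nonneg.2 (hF h₁))
  rw [dotProduct_one_cross]
  fin_cases i <;> simp only [Fin.reduceFinMk, Fin.reduceAdd, Function.comp_apply] at h₁₂ h₀₁ ⊢ <;>
    linarith

lemma Monotone.dotProduct_comp_one_cross_nonpos (hF : Monotone F) (i : Fin 3)
    (h₁ : w i ≤ w (i + 1)) (h₂ : w (i + 1) ≤ w (i + 2))
    (hv₁ : v (i + 1) ≤ v i) (hv₂ : v (i + 1) ≤ v (i + 2)) : (F ∘ w) ⬝ᵥ (1 ⨯₃ v) ≤ 0 := by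
  have := hF.dotProduct_comp_one_cross_nonneg i h₁ h₂ (v := -v) (neg_le_neg hv₁) (neg_le_neg hv₂)
  rwa [map_neg, dotProduct_neg, neg_nonneg] at this

end ThreePoint

lemma phi_eq_div_dotProduct_one_cross {g₁ g₂ : V3}
    (h₁ : Log3 g₁ 0 + Log3 g₁ 1 + Log3 g₁ 2 = 0) (h₂ : Log3 g₂ 0 + Log3 g₂ 1 + Log3 g₂ 2 = 0)
    (α : V3) :
    phi g₁ g₂ α = (Log3 α ⬝ᵥ (1 ⨯₃ Log3 g₂) / Log3 g₁ ⬝ᵥ (1 ⨯₃ Log3 g₂),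
      Log3 α ⬝ᵥ (1 ⨯₃ Log3 g₁) / Log3 g₂ ⬝ᵥ (1 ⨯₃ Log3 g₁)) := by
  simp only [phi, logHc, dotProduct_one_cross]
  simp only [Log3] at *
  congr 1 <;> rw [← mul_div_mul_left _ _ (three_ne_zero' ℝ)] <;> congr 1
  · linear_combination (Real.log (α 1) - Real.log (α 0)) * h₂
  · linear_combination (Real.log (g₁ 1) - Real.log (g₁ 0)) * h₂ +
      (Real.log (g₂ 0) - Real.log (g₂ 1)) * h₁
  · linear_combination (Real.log (α 1) - Real.log (α 0)) * h₁
  · linear_combination (Real.log (g₂ 1) - Real.log (g₂ 0)) * h₁ +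
      (Real.log (g₁ 0) - Real.log (g₁ 1)) * h₂

lemma Log3_seg_pow {g : V3} (hg : IsPos g) (l : ℕ) (t : ℝ) :
    Log3 (seg (g ^ l) t) = (fun ξ => logSeg t (l * ξ)) ∘ Log3 g := by
  funext j
  simp only [Log3, seg, logSeg, Function.comp_apply, Pi.pow_apply, Real.exp_nat_mul,
    Real.exp_log (hg j)]

lemma Log3_lt_of_inv_sq_lt {g : V3} (hg : IsPos g) (hH : Log3 g 0 + Log3 g 1 + Log3 g 2 = 0)
    (h₁ : (g 0)⁻¹ ^ 2 < g 1) (h₀ : 1 < (g 0)⁻¹) : Log3 g 2 < Log3 g 0 ∧ Log3 g 0 < 0 := by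
  have ha : Log3 g 0 < 0 := Real.log_neg (hg 0) ((one_lt_inv₀ (hg 0)).1 h₀)
  have hb : -2 * Log3 g 0 < Log3 g 1 := by
    have := Real.log_lt_log (by positivity) h₁
    rwa [Real.log_pow, Real.log_inv, Nat.cast_ofNat, mul_neg, ← neg_mul] at this
  exact ⟨by linarith, ha⟩

lemma Log3_lt_of_lt_lt_one {g : V3} (hg : IsPos g) (h₀₁ : g 0 < g 1) (h₁ : g 1 < 1) :
    Log3 g 0 < Log3 g 1 ∧ Log3 g 1 < 0 :=
  ⟨Real.log_lt_log (hg 0) h₀₁, Real.log_neg (hg 1) h₁⟩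

lemma dotProduct_one_cross_eq {v w : V3} (hv : v 0 + v 1 + v 2 = 0) (hw : w 0 + w 1 + w 2 = 0) :
    v ⬝ᵥ (1 ⨯₃ w) = 3 * (v 1 * w 0 - v 0 * w 1) := by
  rw [dotProduct_one_cross]
  linear_combination (v 0 - v 1) * hw + (w 1 - w 0) * hv

section Curves

variable {G₁ G₂ : V3} (hH₁ : G₁ 0 + G₁ 1 + G₁ 2 = 0) (hH₂ : G₂ 0 + G₂ 1 + G₂ 2 = 0)
  (h₁ : G₁ 2 < G₁ 0 ∧ G₁ 0 < 0) (h₂ : G₂ 0 < G₂ 1 ∧ G₂ 1 < 0)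
include hH₁ hH₂ h₁ h₂

lemma dotProduct_one_cross_neg : G₁ ⬝ᵥ (1 ⨯₃ G₂) < 0 := by
  rw [dotProduct_one_cross_eq hH₁ hH₂]
  nlinarith [mul_neg_of_pos_of_neg (show 0 < G₁ 1 by linarith) (show G₂ 0 < 0 by linarith),
    mul_pos_of_neg_of_neg (show G₁ 0 < 0 by linarith) (show G₂ 1 < 0 by linarith)]

lemma dotProduct_one_cross_pos : 0 < G₂ ⬝ᵥ (1 ⨯₃ G₁) := by
  rw [triple_product_permutation, triple_product_permutation, ← cross_anticomm, dotProduct_neg]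
  exact neg_pos.2 (dotProduct_one_cross_neg hH₁ hH₂ h₁ h₂)

lemma logSeg_curve_bounds {s t : ℝ} (hs : 0 < s) (ht : t ∈ Icc (0 : ℝ) 1) :
    let u₁ := (fun ξ => logSeg t (s * ξ)) ∘ G₁
    let u₂ := (fun ξ => logSeg t (s * ξ)) ∘ G₂
    0 ≤ u₁ ⬝ᵥ (1 ⨯₃ G₁) / G₂ ⬝ᵥ (1 ⨯₃ G₁) ∧
    u₂ ⬝ᵥ (1 ⨯₃ G₂) / G₁ ⬝ᵥ (1 ⨯₃ G₂) ≤ 0 ∧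
    0 ≤ u₁ ⬝ᵥ (1 ⨯₃ G₂) / G₁ ⬝ᵥ (1 ⨯₃ G₂) ∧
    u₁ ⬝ᵥ (1 ⨯₃ G₂) / G₁ ⬝ᵥ (1 ⨯₃ G₂) ≤ s ∧
    0 ≤ u₂ ⬝ᵥ (1 ⨯₃ G₁) / G₂ ⬝ᵥ (1 ⨯₃ G₁) ∧
    u₂ ⬝ᵥ (1 ⨯₃ G₁) / G₂ ⬝ᵥ (1 ⨯₃ G₁) ≤ s := by
  intro u₁ u₂
  have hden₁ := dotProduct_one_cross_neg hH₁ hH₂ h₁ h₂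
  have hden₂ := dotProduct_one_cross_pos hH₁ hH₂ h₁ h₂
  obtain ⟨h₁20, h₁01⟩ : G₁ 2 < G₁ 0 ∧ G₁ 0 < G₁ 1 := ⟨h₁.1, by linarith⟩
  obtain ⟨h₂01, h₂12⟩ : G₂ 0 < G₂ 1 ∧ G₂ 1 < G₂ 2 := ⟨h₂.1, by linarith⟩
  have hmono : Monotone fun ξ => logSeg t (s * ξ) :=
    (logSeg_monotone ht).comp (monotone_mul_left_of_nonneg hs.le)
  have hmono' : Monotone fun ξ => s * ξ - logSeg t (s * ξ) :=
    (monotone_sub_logSeg ht).comp (monotone_mul_left_of_nonneg hs.le)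
  have hconv : ConvexOn ℝ univ fun ξ => logSeg t (s * ξ) :=
    (convexOn_logSeg ht).comp_linearMap (LinearMap.mul ℝ ℝ s)
  have hsub (G : V3) : (fun ξ => s * ξ - logSeg t (s * ξ)) ∘ G =
      s • G - (fun ξ => logSeg t (s * ξ)) ∘ G := rfl
  have hx₁ := hmono'.dotProduct_comp_one_cross_nonpos 2 h₁20.le h₁01.le
    (h₂01.trans h₂12).le h₂01.le
  have hy₂ := hmono'.dotProduct_comp_one_cross_nonneg 0 h₂01.le h₂12.le h₁01.le
    (h₁20.trans h₁01).le
  rw [hsub, sub_dotProduct, smul_dotProduct, smul_eq_mul, sub_nonpos] at hx₁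
  rw [hsub, sub_dotProduct, smul_dotProduct, smul_eq_mul, sub_nonneg] at hy₂
  exact ⟨div_nonneg (hconv.dotProduct_comp_one_cross_nonneg 2 h₁20 h₁01) hden₂.le,
    div_nonpos_of_nonneg_of_nonpos (hconv.dotProduct_comp_one_cross_nonneg 0 h₂01 h₂12) hden₁.le,
    div_nonneg_of_nonpos (hmono.dotProduct_comp_one_cross_nonpos 2 h₁20.le h₁01.le
      (h₂01.trans h₂12).le h₂01.le) hden₁.le,
    (div_le_iff_of_neg hden₁).2 hx₁,
    div_nonneg (hmono.dotProduct_comp_one_cross_nonneg 0 h₂01.le h₂12.le h₁01.le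
      (h₁20.trans h₁01).le) hden₂.le,
    (div_le_iff₀ hden₂).2 hy₂⟩

end Curves

theorem stmt8_general (E : Subgroup V3ˣ) (hE : IsUnitLattice E) (g₁ g₂ : V3ˣ)
    (hfree : FreeRank2FinIndex E g₁ g₂)
    (hg₁ : (g₁ : V3) 1 > ((g₁ : V3) 0)⁻¹ ^ 2 ∧ ((g₁ : V3) 0)⁻¹ ^ 2 > ((g₁ : V3) 0)⁻¹ ∧
      ((g₁ : V3) 0)⁻¹ > 1)
    (hg₂ : (g₂ : V3) 0 < (g₂ : V3) 1 ∧ (g₂ : V3) 1 < 1) :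
    ∃ L₁ : ℝ, 0 < L₁ ∧ ∀ l : ℕ, (l : ℝ) > L₁ → ∀ t ∈ Set.Icc (0 : ℝ) 1,
      0 ≤ yC (g₁ : V3) (g₂ : V3) (g₁ : V3) l t ∧
      xC (g₁ : V3) (g₂ : V3) (g₂ : V3) l t ≤ 0 ∧
      0 ≤ xC (g₁ : V3) (g₂ : V3) (g₁ : V3) l t ∧
      xC (g₁ : V3) (g₂ : V3) (g₁ : V3) l t ≤ l ∧
      0 ≤ yC (g₁ : V3) (g₂ : V3) (g₂ : V3) l t ∧
      yC (g₁ : V3) (g₂ : V3) (g₂ : V3) l t ≤ l := by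
  obtain ⟨hpos, hH, -⟩ := hE
  obtain ⟨h₁E, h₂E, -, -⟩ := hfree
  refine ⟨1, one_pos, fun l hl t ht => ?_⟩
  simp only [xC, yC, phi_eq_div_dotProduct_one_cross (hH _ h₁E) (hH _ h₂E),
    Log3_seg_pow (hpos _ h₁E), Log3_seg_pow (hpos _ h₂E)]
  exact logSeg_curve_bounds (hH _ h₁E) (hH _ h₂E)
    (Log3_lt_of_inv_sq_lt (hpos _ h₁E) (hH _ h₁E) hg₁.1 hg₁.2.2)
    (Log3_lt_of_lt_lt_one (hpos _ h₂E) hg₂.1 hg₂.2) (by linarith) ht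

/-- Corollary 6.9 of the paper: control of the curves `𝒞_{1,l}` and
`𝒞_{2,l}` for large `l`. -/
theorem stmt8 (E : Subgroup V3ˣ) (hE : IsUnitLattice E) (g₁ g₂ : V3ˣ)
    (hfree : FreeRank2FinIndex E g₁ g₂)
    (hsign : ∀ m : ℕ, 1 ≤ m →
      deltaB ((g₁ : V3) ^ m) ((g₂ : V3) ^ m) = 1 ∧
      deltaB ((g₂ : V3) ^ m) ((g₁ : V3) ^ m) = -1)
    (hg₁ : (g₁ : V3) 1 > ((g₁ : V3) 0)⁻¹ ^ 2 ∧ ((g₁ : V3) 0)⁻¹ ^ 2 > ((g₁ : V3) 0)⁻¹ ∧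
      ((g₁ : V3) 0)⁻¹ > 1)
    (hg₂ : (g₂ : V3) 0 < (g₂ : V3) 1 ∧ (g₂ : V3) 1 < 1) :
    ∃ L₁ : ℝ, 0 < L₁ ∧ ∀ l : ℕ, (l : ℝ) > L₁ → ∀ t ∈ Set.Icc (0 : ℝ) 1,
      0 ≤ yC (g₁ : V3) (g₂ : V3) (g₁ : V3) l t ∧
      xC (g₁ : V3) (g₂ : V3) (g₂ : V3) l t ≤ 0 ∧
      0 ≤ xC (g₁ : V3) (g₂ : V3) (g₁ : V3) l t ∧
      xC (g₁ : V3) (g₂ : V3) (g₁ : V3) l t ≤ l ∧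
      0 ≤ yC (g₁ : V3) (g₂ : V3) (g₂ : V3) l t ∧
      yC (g₁ : V3) (g₂ : V3) (g₂ : V3) l t ≤ l :=
  stmt8_general E hE g₁ g₂ hfree hg₁ hg₂
end
end

section
/- Suppose g₁, g₂ ∈ E₊(𝔣) generate a free rank-2 finite-index subgroup of E₊(𝔣), that δ([g₁^m | g₂^m]) = −δ([g₂^m | g₁^m]) = 1 for every integer m ≥ 1, that σ₂(g₁) > σ₁(g₁)⁻² > σ₁(g₁)⁻¹ > 1 and σ₁(g₂) < σ₂(g₂) < 1, and that Log(g_i) ∈ B(l_i(M₁), r) for i = 1,2, where r, M₁ > 0. Let π ∈ F be totally positive. Then there exists L > 0 such that for every integer l > L there exists α ∈ π_ℋ⁻¹E₊(𝔣) with α ∈ C([g₁^l | g₂^l]) ∪ C([g₂^l | g₁^l]) ∪ C(1, g₁^l g₂^l) and Log(α) ∈ B(−l₀(l·M₁), 4·l·r). -/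
noncomputable section

open Filter Set

/-!
Take `α = π_ℋ⁻¹ · g₁ ^ (l - ⌈η l⌉) · g₂ ^ l` for a small `η > 0`. Every coordinate of the vectors
`1`, `gᵢ ^ l`, `g₁ ^ l g₂ ^ l` and `α` is `exp (l · rate + O(1))`, so by Cramer's rule `α` lies in
an open simplicial cone as soon as each of the four determinants involved has a term whose rate
beats those of the terms of opposite sign. Comparing rates, this holds for
`C([g₁ ^ l ∣ g₂ ^ l])` when `σ₃(g₁g₂) < σ₁(g₁g₂)` and for `C([g₂ ^ l ∣ g₁ ^ l])` otherwise.
The rate of `α` is `Log g₁ + Log g₂ - η Log g₁`, which lies within `2r + η ‖Log g₁‖` of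
`l₁(M₁) + l₂(M₁) = -l₀(M₁)`; this gives the ball.
-/
open scoped Topology

def det3 (u v w : V3) : ℝ := Matrix.det (Matrix.of ![u, v, w])

theorem det3_eq (u v w : V3) :
    det3 u v w = u 0 * v 1 * w 2 - u 0 * v 2 * w 1 - u 1 * v 0 * w 2 + u 1 * v 2 * w 0 +
      u 2 * v 0 * w 1 - u 2 * v 1 * w 0 := by
  simp [det3, Matrix.det_fin_three]

theorem det3_rotate (u v w : V3) : det3 u v w = det3 v w u := by
  simp only [det3_eq]; ring

theorem det3_swap (u v w : V3) : det3 u v w = -det3 u w v := by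
  simp only [det3_eq]; ring

theorem mem_cone3_of_div_det3_pos {u v w x : V3} (h₁ : 0 < det3 x v w / det3 u v w)
    (h₂ : 0 < det3 u x w / det3 u v w) (h₃ : 0 < det3 u v x / det3 u v w) :
    x ∈ cone3 u v w := by
  have hD : det3 u v w ≠ 0 := fun h => by simp [h] at h₁
  refine ⟨_, _, _, h₁, h₂, h₃, ?_⟩
  funext i
  fin_cases i <;>
  · simp only [Fin.zero_eta, Fin.mk_one, Fin.reduceFinMk, Pi.add_apply, Pi.smul_apply, smul_eq_mul]
    field_simp
    simp only [det3_eq]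
    ring

def HasExpRate (u : ℕ → V3) (ρ : V3) : Prop :=
  (∀ l i, 0 < u l i) ∧ ∃ C, ∀ l : ℕ, dist (Log3 (u l)) ((l : ℝ) • ρ) ≤ C

namespace HasExpRate

variable {u v w : ℕ → V3} {ρ σ τ : V3}

theorem const {c : V3} (hc : IsPos c) : HasExpRate (fun _ => c) 0 :=
  ⟨fun _ i => hc i, dist (Log3 c) 0, fun l => by rw [smul_zero]⟩

theorem mul (hu : HasExpRate u ρ) (hv : HasExpRate v σ) :
    HasExpRate (fun l => u l * v l) (ρ + σ) := by
  obtain ⟨hu₀, C, hC⟩ := hu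
  obtain ⟨hv₀, D, hD⟩ := hv
  refine ⟨fun l i => mul_pos (hu₀ l i) (hv₀ l i), C + D, fun l => ?_⟩
  have hlog : Log3 (u l * v l) = Log3 (u l) + Log3 (v l) := by
    funext i; exact Real.log_mul (hu₀ l i).ne' (hv₀ l i).ne'
  rw [hlog, smul_add]
  exact (dist_add_add_le _ _ _ _).trans (add_le_add (hC l) (hD l))

theorem pow_of_abs_sub_le {a : V3} (ha : IsPos a) {n : ℕ → ℕ} {μ K : ℝ}
    (hn : ∀ l : ℕ, |(n l : ℝ) - l * μ| ≤ K) : HasExpRate (fun l => a ^ n l) (μ • Log3 a) := by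
  refine ⟨fun l i => pow_pos (ha i) _, K * ‖Log3 a‖, fun l => ?_⟩
  have hlog : Log3 (a ^ n l) = (n l : ℝ) • Log3 a := by
    funext i; exact Real.log_pow _ _
  rw [hlog, smul_smul, dist_eq_norm, ← sub_smul, norm_smul, Real.norm_eq_abs]
  exact mul_le_mul_of_nonneg_right (hn l) (norm_nonneg _)

theorem pow {a : V3} (ha : IsPos a) : HasExpRate (fun l => a ^ l) (Log3 a) := by
  simpa using pow_of_abs_sub_le ha (n := id) (μ := 1) (K := 0) (by simp)

theorem mul_pow_sub_ceil_mul_pow {c a b : V3} (hc : IsPos c) (ha : IsPos a) (hb : IsPos b)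
    {η : ℝ} (hη₀ : 0 ≤ η) (hη₁ : η ≤ 1) :
    HasExpRate (fun l : ℕ => c * (a ^ (l - ⌈η * l⌉₊) * b ^ l))
      (Log3 a + Log3 b - η • Log3 a) := by
  have hceil : ∀ l : ℕ, |((l - ⌈η * l⌉₊ : ℕ) : ℝ) - l * (1 - η)| ≤ 1 := fun l => by
    have hl : (0 : ℝ) ≤ l := l.cast_nonneg
    have hJ : ⌈η * l⌉₊ ≤ l := Nat.ceil_le.2 (by nlinarith)
    have hJ₁ := Nat.ceil_lt_add_one (mul_nonneg hη₀ hl)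
    have hJ₀ := Nat.le_ceil (η * l)
    rw [Nat.cast_sub hJ, abs_le]
    constructor <;> linarith
  convert (const hc).mul ((pow_of_abs_sub_le ha hceil).mul (pow hb)) using 1
  module

theorem abs_log_sub_le (hu : HasExpRate u ρ) :
    ∃ C, ∀ (l : ℕ) (i : Fin 3), |Real.log (u l i) - l * ρ i| ≤ C := by
  obtain ⟨-, C, hC⟩ := hu
  exact ⟨C, fun l i => (dist_le_pi_dist (Log3 (u l)) ((l : ℝ) • ρ) i).trans (hC l)⟩

theorem eventually_mul_lt_mul (hu : HasExpRate u ρ) (hv : HasExpRate v σ) {i j : Fin 3}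
    (h : ρ j + σ i < ρ i + σ j) {c : ℝ} (hc : 0 < c) :
    ∀ᶠ l : ℕ in atTop, u l j * v l i < c * (u l i * v l j) := by
  obtain ⟨C, hC⟩ := hu.abs_log_sub_le
  obtain ⟨D, hD⟩ := hv.abs_log_sub_le
  have hlarge : ∀ᶠ l : ℕ in atTop, 2 * (C + D) - Real.log c < l * (ρ i + σ j - (ρ j + σ i)) :=
    (tendsto_natCast_atTop_atTop.atTop_mul_const (sub_pos.2 h)).eventually_gt_atTop _
  filter_upwards [hlarge] with l hl
  have hu₀ := hu.1 l
  have hv₀ := hv.1 l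
  rw [← Real.log_lt_log_iff (mul_pos (hu₀ j) (hv₀ i)) (mul_pos hc (mul_pos (hu₀ i) (hv₀ j))),
    Real.log_mul (hu₀ j).ne' (hv₀ i).ne', Real.log_mul hc.ne' (mul_pos (hu₀ i) (hv₀ j)).ne',
    Real.log_mul (hu₀ i).ne' (hv₀ j).ne']
  have := abs_le.1 (hC l i); have := abs_le.1 (hC l j)
  have := abs_le.1 (hD l i); have := abs_le.1 (hD l j)
  linarith

theorem eventually_det3_pos (hu : HasExpRate u ρ) (hv : HasExpRate v σ) (hw : HasExpRate w τ)
    (h₀₁ : ρ 1 + σ 0 < ρ 0 + σ 1) (h₀₂ : ρ 2 + τ 0 < ρ 0 + τ 2)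
    (h₁₂ : σ 2 + τ 1 < σ 1 + τ 2) :
    ∀ᶠ l : ℕ in atTop, 0 < det3 (u l) (v l) (w l) := by
  -- the diagonal term `u 0 * v 1 * w 2` eventually exceeds three times each negative term
  filter_upwards [hu.eventually_mul_lt_mul hv h₀₁ (c := 1 / 3) (by norm_num),
    hu.eventually_mul_lt_mul hw h₀₂ (c := 1 / 3) (by norm_num),
    hv.eventually_mul_lt_mul hw h₁₂ (c := 1 / 3) (by norm_num)] with l h₁ h₂ h₃
  have hu₀ := hu.1 l
  have hv₀ := hv.1 l
  have hw₀ := hw.1 l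
  have e₁ := mul_lt_mul_of_pos_right h₁ (hw₀ 2)
  have e₂ := mul_lt_mul_of_pos_right h₂ (hv₀ 1)
  have e₃ := mul_lt_mul_of_pos_left h₃ (hu₀ 0)
  have : 0 < u l 1 * v l 2 * w l 0 := mul_pos (mul_pos (hu₀ 1) (hv₀ 2)) (hw₀ 0)
  have : 0 < u l 2 * v l 0 * w l 1 := mul_pos (mul_pos (hu₀ 2) (hv₀ 0)) (hw₀ 1)
  rw [det3_eq]
  linarith

theorem eventually_log_mem_ball (hu : HasExpRate u ρ) {c : V3} {R : ℝ} (h : dist ρ c < R) :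
    ∀ᶠ l : ℕ in atTop, Log3 (u l) ∈ Metric.ball ((l : ℝ) • c) (l * R) := by
  obtain ⟨-, C, hC⟩ := hu
  filter_upwards
    [(tendsto_natCast_atTop_atTop.atTop_mul_const (sub_pos.2 h)).eventually_gt_atTop C] with l hl
  calc dist (Log3 (u l)) ((l : ℝ) • c)
      ≤ dist (Log3 (u l)) ((l : ℝ) • ρ) + dist ((l : ℝ) • ρ) ((l : ℝ) • c) :=
        dist_triangle _ _ _
    _ ≤ C + l * dist ρ c := by
        rw [dist_smul₀, Real.norm_natCast]; exact add_le_add_left (hC l) _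
    _ < l * R := by linarith

end HasExpRate

section Cones

variable {u v w x : ℕ → V3} {p q : V3} {η : ℝ}

theorem eventually_mem_cone3_of_mul_lt (hu : HasExpRate u 0) (hv : HasExpRate v p)
    (hw : HasExpRate w (p + q)) (hx : HasExpRate x (p + q - η • p))
    (hp₀₁ : p 0 < p 1) (hp₂₀ : p 2 < p 0) (hq₀₂ : q 0 < q 2)
    (hη : 0 < η) (hη₁ : η * (p 1 - p 0) < q 1 - q 0)
    (hη₂ : η * (p 0 - p 2) < p 0 + q 0 - (p 2 + q 2)) :
    ∀ᶠ l : ℕ in atTop, x l ∈ cone3 (u l) (v l) (w l) := by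
  -- a cyclic permutation of the rows puts the dominant term of each determinant on the diagonal
  have hdet : ∀ᶠ l : ℕ in atTop, 0 < det3 (v l) (w l) (u l) ∧ 0 < det3 (v l) (w l) (x l) ∧
      0 < det3 (x l) (w l) (u l) ∧ 0 < det3 (v l) (x l) (u l) := by
    refine (hv.eventually_det3_pos hw hu ?_ ?_ ?_).and <|
      (hv.eventually_det3_pos hw hx ?_ ?_ ?_).and <|
      (hx.eventually_det3_pos hw hu ?_ ?_ ?_).and (hv.eventually_det3_pos hx hu ?_ ?_ ?_) <;>
    simp only [Pi.add_apply, Pi.sub_apply, Pi.smul_apply, smul_eq_mul, Pi.zero_apply] <;>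
    nlinarith
  filter_upwards [hdet] with l ⟨hD, hD₁, hD₂, hD₃⟩
  rw [← det3_rotate] at hD hD₁ hD₂ hD₃
  exact mem_cone3_of_div_det3_pos (div_pos hD₁ hD) (div_pos hD₂ hD) (div_pos hD₃ hD)

theorem eventually_mem_cone3_of_add_le (hu : HasExpRate u 0) (hv : HasExpRate v q)
    (hw : HasExpRate w (q + p)) (hx : HasExpRate x (p + q - η • p))
    (hp₀₁ : p 0 < p 1) (hp₂₀ : p 2 < p 0) (hq₀₁ : q 0 < q 1)
    (hs : p 0 + q 0 ≤ p 2 + q 2) (hη₀ : 0 < η) (hη₁ : η < 1) :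
    ∀ᶠ l : ℕ in atTop, x l ∈ cone3 (u l) (v l) (w l) := by
  -- swapping the last two rows puts the dominant term of each determinant on the diagonal
  have hdet : ∀ᶠ l : ℕ in atTop, 0 < det3 (u l) (w l) (v l) ∧ 0 < det3 (x l) (w l) (v l) ∧
      0 < det3 (u l) (w l) (x l) ∧ 0 < det3 (u l) (x l) (v l) := by
    refine (hu.eventually_det3_pos hw hv ?_ ?_ ?_).and <|
      (hx.eventually_det3_pos hw hv ?_ ?_ ?_).and <|
      (hu.eventually_det3_pos hw hx ?_ ?_ ?_).and (hu.eventually_det3_pos hx hv ?_ ?_ ?_) <;>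
    simp only [Pi.add_apply, Pi.sub_apply, Pi.smul_apply, smul_eq_mul, Pi.zero_apply] <;>
    nlinarith
  filter_upwards [hdet] with l ⟨hD, hD₁, hD₂, hD₃⟩
  have := det3_swap (u l) (v l) (w l); have := det3_swap (x l) (v l) (w l)
  have := det3_swap (u l) (x l) (w l); have := det3_swap (u l) (v l) (x l)
  refine mem_cone3_of_div_det3_pos (div_pos_of_neg_of_neg ?_ ?_) (div_pos_of_neg_of_neg ?_ ?_)
    (div_pos_of_neg_of_neg ?_ ?_) <;> linarith

end Cones

theorem eventually_mul_lt_of_pos {A B : ℝ} (hB : 0 < B) : ∀ᶠ η in 𝓝[>] (0 : ℝ), η * A < B :=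
  nhdsWithin_le_nhds <| ((continuous_mul_const A).tendsto' 0 0 (zero_mul A)).eventually_lt_const hB

theorem eventually_mem_coneB_union {a b w : V3} (ha : IsPos a) (hb : IsPos b) (hw : IsPos w)
    (hp₀₁ : Log3 a 0 < Log3 a 1) (hp₂₀ : Log3 a 2 < Log3 a 0) (hq₀₁ : Log3 b 0 < Log3 b 1)
    (hq₀₂ : Log3 b 0 < Log3 b 2) :
    ∀ᶠ η : ℝ in 𝓝[>] 0, ∀ᶠ l : ℕ in atTop,
      w * (a ^ (l - ⌈η * l⌉₊) * b ^ l) ∈ coneB (a ^ l) (b ^ l) ∪ coneB (b ^ l) (a ^ l) := by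
  have hone : HasExpRate (fun _ => (1 : V3)) 0 := .const fun _ => one_pos
  have hx : ∀ᶠ η : ℝ in 𝓝[>] 0, 0 < η ∧ η < 1 ∧
      HasExpRate (fun l : ℕ => w * (a ^ (l - ⌈η * l⌉₊) * b ^ l))
        (Log3 a + Log3 b - η • Log3 a) := by
    filter_upwards [eventually_mem_nhdsWithin, eventually_mul_lt_of_pos (A := 1) one_pos]
      with η (hη₀ : 0 < η) hη₁
    rw [mul_one] at hη₁
    exact ⟨hη₀, hη₁, .mul_pow_sub_ceil_mul_pow hw ha hb hη₀.le hη₁.le⟩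
  rcases lt_or_ge (Log3 a 2 + Log3 b 2) (Log3 a 0 + Log3 b 0) with hs | hs
  · filter_upwards [hx, eventually_mul_lt_of_pos (A := Log3 a 1 - Log3 a 0) (sub_pos.2 hq₀₁),
      eventually_mul_lt_of_pos (A := Log3 a 0 - Log3 a 2) (sub_pos.2 hs)]
      with η ⟨hη₀, _, hαη⟩ hη₁ hη₂
    refine (eventually_mem_cone3_of_mul_lt hone (.pow ha) ((HasExpRate.pow ha).mul (.pow hb)) hαη
      hp₀₁ hp₂₀ hq₀₂ hη₀ ?_ ?_).mono fun _ => Or.inl <;> linarith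
  · filter_upwards [hx] with η ⟨hη₀, hη₁, hαη⟩
    exact (eventually_mem_cone3_of_add_le hone (.pow hb) ((HasExpRate.pow hb).mul (.pow ha)) hαη
      hp₀₁ hp₂₀ hq₀₁ hs hη₀ hη₁).mono fun _ => Or.inr

theorem log3_two_lt_zero_lt_one {a : V3} (ha : IsPos a)
    (hsum : Log3 a 0 + Log3 a 1 + Log3 a 2 = 0) (h₁ : a 1 > (a 0)⁻¹ ^ 2) (h₀ : (a 0)⁻¹ > 1) :
    Log3 a 2 < Log3 a 0 ∧ Log3 a 0 < Log3 a 1 := by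
  have e₁ : -2 * Log3 a 0 < Log3 a 1 := by
    have := Real.log_lt_log (by have := ha 0; positivity) h₁
    rw [Real.log_pow, Real.log_inv] at this
    simp only [Log3]; push_cast at this; linarith
  have e₀ : Log3 a 0 < 0 := by
    have := Real.log_pos h₀
    rw [Real.log_inv] at this
    simp only [Log3]; linarith
  constructor <;> linarith

theorem log3_zero_lt_one_and_lt_two {b : V3} (hb : IsPos b)
    (hsum : Log3 b 0 + Log3 b 1 + Log3 b 2 = 0) (h : b 0 < b 1 ∧ b 1 < 1) :
    Log3 b 0 < Log3 b 1 ∧ Log3 b 0 < Log3 b 2 := by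
  have e₀ : Log3 b 0 < Log3 b 1 := Real.log_lt_log (hb 0) h.1
  have e₁ : Log3 b 1 < 0 := Real.log_neg (hb 1) h.2
  constructor <;> linarith

theorem lvec_one_add_lvec_two (M : ℝ) : lvec 1 M + lvec 2 M = -lvec 0 M := by
  funext i; fin_cases i <;> simp [lvec] <;> ring

theorem neg_lvec_mul (i : Fin 3) (t M : ℝ) : -lvec i (t * M) = t • -lvec i M := by
  funext j; simp only [lvec, Pi.neg_apply, Pi.smul_apply, smul_eq_mul]; split_ifs <;> ring

theorem dist_sub_smul_neg_lvec_lt {p q : V3} {M r η : ℝ} (hp : dist p (lvec 1 M) < r)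
    (hq : dist q (lvec 2 M) < r) (hη₀ : 0 ≤ η) (hη : η * ‖p‖ < 2 * r) :
    dist (p + q - η • p) (-lvec 0 M) < 4 * r := by
  rw [dist_eq_norm] at hp hq ⊢
  rw [← lvec_one_add_lvec_two,
    show p + q - η • p - (lvec 1 M + lvec 2 M) = (p - lvec 1 M) + (q - lvec 2 M) - η • p by abel]
  calc ‖(p - lvec 1 M) + (q - lvec 2 M) - η • p‖
      ≤ ‖p - lvec 1 M‖ + ‖q - lvec 2 M‖ + ‖η • p‖ :=
        (norm_sub_le _ _).trans (add_le_add_left (norm_add_le _ _) _)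
    _ < 4 * r := by rw [norm_smul, Real.norm_of_nonneg hη₀]; linarith

theorem stmt10_general (E : Subgroup V3ˣ) (hE : IsUnitLattice E) (g₁ g₂ : V3ˣ)
    (hfree : FreeRank2FinIndex E g₁ g₂)
    (hg₁ : (g₁ : V3) 1 > ((g₁ : V3) 0)⁻¹ ^ 2 ∧ ((g₁ : V3) 0)⁻¹ ^ 2 > ((g₁ : V3) 0)⁻¹ ∧
      ((g₁ : V3) 0)⁻¹ > 1)
    (hg₂ : (g₂ : V3) 0 < (g₂ : V3) 1 ∧ (g₂ : V3) 1 < 1)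
    (r M₁ : ℝ) (hr : 0 < r)
    (hball₁ : Log3 (g₁ : V3) ∈ Metric.ball (lvec 1 M₁) r)
    (hball₂ : Log3 (g₂ : V3) ∈ Metric.ball (lvec 2 M₁) r)
    (π : V3) (hπ : IsPos π) :
    ∃ L : ℝ, 0 < L ∧ ∀ l : ℕ, (l : ℝ) > L → ∃ u ∈ E,
      (projH π)⁻¹ * ((u : V3ˣ) : V3) ∈
        coneB ((g₁ : V3) ^ l) ((g₂ : V3) ^ l) ∪ coneB ((g₂ : V3) ^ l) ((g₁ : V3) ^ l) ∪
          cone2 1 ((g₁ : V3) ^ l * (g₂ : V3) ^ l) ∧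
      Log3 ((projH π)⁻¹ * ((u : V3ˣ) : V3)) ∈
        Metric.ball (-lvec 0 ((l : ℝ) * M₁)) (4 * (l : ℝ) * r) := by
  obtain ⟨hg₁E, hg₂E, -, -⟩ := hfree
  have ha : IsPos (g₁ : V3) := hE.1 g₁ hg₁E
  have hb : IsPos (g₂ : V3) := hE.1 g₂ hg₂E
  have hw : IsPos (projH π)⁻¹ := fun i => inv_pos.2 <| mul_pos (Real.rpow_pos_of_pos
    (mul_pos (mul_pos (hπ 0) (hπ 1)) (hπ 2)) _) (hπ i)
  obtain ⟨hp₂₀, hp₀₁⟩ := log3_two_lt_zero_lt_one ha (hE.2.1 g₁ hg₁E) hg₁.1 hg₁.2.2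
  obtain ⟨hq₀₁, hq₀₂⟩ := log3_zero_lt_one_and_lt_two hb (hE.2.1 g₂ hg₂E) hg₂
  have hsmall : ∀ᶠ η : ℝ in 𝓝[>] 0, 0 < η ∧ η * 1 < 1 ∧ η * ‖Log3 (g₁ : V3)‖ < 2 * r :=
    eventually_mem_nhdsWithin.and <| (eventually_mul_lt_of_pos one_pos).and <|
      eventually_mul_lt_of_pos (by positivity)
  obtain ⟨η, ⟨hη₀, hη₁, hηr⟩, hcone⟩ :=
    (hsmall.and (eventually_mem_coneB_union ha hb hw hp₀₁ hp₂₀ hq₀₁ hq₀₂)).exists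
  have hrate := HasExpRate.mul_pow_sub_ceil_mul_pow hw ha hb hη₀.le (by linarith)
  have hball := hrate.eventually_log_mem_ball (dist_sub_smul_neg_lvec_lt hball₁ hball₂ hη₀.le hηr)
  obtain ⟨N, hN⟩ := eventually_atTop.1 (hcone.and hball)
  refine ⟨N + 1, by positivity, fun l hl => ⟨g₁ ^ (l - ⌈η * l⌉₊) * g₂ ^ l,
    mul_mem (pow_mem hg₁E _) (pow_mem hg₂E _), ?_⟩⟩
  obtain ⟨hmem, hlog⟩ := hN l (by exact_mod_cast (by linarith : (N : ℝ) ≤ l))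
  rw [Units.val_mul, Units.val_pow_eq_pow_val, Units.val_pow_eq_pow_val, neg_lvec_mul,
    show 4 * (l : ℝ) * r = l * (4 * r) by ring]
  exact ⟨Or.inl hmem, hlog⟩

/-- Lemma 6.10 of the paper: existence, for all large `l`, of an
element `α ∈ π_ℋ⁻¹·E₊(𝔣)` lying in the prescribed cones, with `Log(α)` in the
ball `B(−l₀(l·M₁), 4·l·r)`. -/
theorem stmt10 (E : Subgroup V3ˣ) (hE : IsUnitLattice E) (g₁ g₂ : V3ˣ)
    (hfree : FreeRank2FinIndex E g₁ g₂)
    (hsign : ∀ m : ℕ, 1 ≤ m →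
      deltaB ((g₁ : V3) ^ m) ((g₂ : V3) ^ m) = 1 ∧
      deltaB ((g₂ : V3) ^ m) ((g₁ : V3) ^ m) = -1)
    (hg₁ : (g₁ : V3) 1 > ((g₁ : V3) 0)⁻¹ ^ 2 ∧ ((g₁ : V3) 0)⁻¹ ^ 2 > ((g₁ : V3) 0)⁻¹ ∧
      ((g₁ : V3) 0)⁻¹ > 1)
    (hg₂ : (g₂ : V3) 0 < (g₂ : V3) 1 ∧ (g₂ : V3) 1 < 1)
    (r M₁ : ℝ) (hr : 0 < r) (hM₁ : 0 < M₁)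
    (hball₁ : Log3 (g₁ : V3) ∈ Metric.ball (lvec 1 M₁) r)
    (hball₂ : Log3 (g₂ : V3) ∈ Metric.ball (lvec 2 M₁) r)
    (π : V3) (hπ : IsPos π) :
    ∃ L : ℝ, 0 < L ∧ ∀ l : ℕ, (l : ℝ) > L → ∃ u ∈ E,
      (projH π)⁻¹ * ((u : V3ˣ) : V3) ∈
        coneB ((g₁ : V3) ^ l) ((g₂ : V3) ^ l) ∪ coneB ((g₂ : V3) ^ l) ((g₁ : V3) ^ l) ∪
          cone2 1 ((g₁ : V3) ^ l * (g₂ : V3) ^ l) ∧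
      Log3 ((projH π)⁻¹ * ((u : V3ˣ) : V3)) ∈
        Metric.ball (-lvec 0 ((l : ℝ) * M₁)) (4 * (l : ℝ) * r) :=
  stmt10_general E hE g₁ g₂ hfree hg₁ hg₂ r M₁ hr hball₁ hball₂ π hπ
end
end

section
/- Set g₁ = −96y² + 152y + 113, g₂ = 160y² + 32y − 31 and π = 192y² − 488y + 177 in F; these elements are totally positive. Let D = C̄_{e₁}([g₁|g₂]) ∪ C̄_{e₁}([g₂|g₁]) ⊂ ℝ₊³. Then π⁻¹ ∈ D, and the intersections π⁻¹D ∩ g₁g₂⁻¹D and π⁻¹D ∩ g₂⁻¹D are both nonempty. In particular, the translation property 'εD ∩ π⁻¹D = ∅ unless ε = g₁^{m₁}g₂^{m₂} with m₁, m₂ ∈ {0,1}' (Statement A.1 of the paper, due to Tsosie) fails for this data. -/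
noncomputable section

open Filter Set

/-!
The three elements are totally positive because their characteristic polynomials have
coefficients of alternating signs. Since the conjugates of `y` are distinct, Lagrange
interpolation writes `e₁` as a combination of `1, y, y²`, hence of `1, g₁, g₁g₂` and of
`1, g₂, g₂g₁` (each a basis of `F`); so a small perturbation by `e₁` does not leave the open cones
`C([g₁|g₂])` and `C([g₂|g₁])`, and both lie in `D`. Everything else is witnessed by explicit points
of these open cones: `π⁻¹` itself, and `π⁻¹α = g₁g₂⁻¹β`, `π⁻¹α' = g₂⁻¹β'` with
`α, α' ∈ C([g₁|g₂])` and `β, β' ∈ C([g₂|g₁])`. Each of these is an identity in `F`, checked as a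
polynomial identity in `y` modulo `2y³ − 4y² − y + 1`; taking `ε = g₁g₂⁻¹` then refutes the
translation property.
-/

open scoped Topology

lemma mem_closE1_of_eventually {S : Set V3} {x : V3}
    (h : ∀ᶠ t in 𝓝 (0 : ℝ), x + t • eOne ∈ S) : x ∈ closE1 S := by
  obtain ⟨ε, hε, hS⟩ := Metric.eventually_nhds_iff.1 h
  refine ⟨ε, hε, fun t ht₀ htε => hS ?_⟩
  rwa [Real.dist_eq, sub_zero, abs_of_pos ht₀]

lemma eventually_pos_add_mul {p : ℝ} (hp : 0 < p) (a : ℝ) :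
    ∀ᶠ t in 𝓝 (0 : ℝ), 0 < p + t * a :=
  Tendsto.eventually_const_lt hp <| by
    simpa using ((tendsto_id (x := 𝓝 (0 : ℝ))).mul_const a).const_add p

lemma cone3_subset_closE1 {v w z : V3} (he : eOne ∈ Submodule.span ℝ {v, w, z}) :
    cone3 v w z ⊆ closE1 (cone3 v w z) := by
  obtain ⟨a, b, c, he⟩ := Submodule.mem_span_triple.1 he
  rintro _ ⟨p, q, r, hp, hq, hr, rfl⟩
  apply mem_closE1_of_eventually
  filter_upwards [eventually_pos_add_mul hp a, eventually_pos_add_mul hq b,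
    eventually_pos_add_mul hr c] with t hpt hqt hrt
  exact ⟨_, _, _, hpt, hqt, hrt, by rw [← he]; module⟩

lemma coneB_subset_coneBbar {x y : V3} (he : eOne ∈ Submodule.span ℝ {1, x, x * y}) :
    coneB x y ⊆ coneBbar x y :=
  cone3_subset_closE1 he

lemma eOne_mem_span_one_self_sq {y : V3} (hy : Function.Injective y) :
    eOne ∈ Submodule.span ℝ {1, y, y ^ 2} := by
  have h₁ : y 0 - y 1 ≠ 0 := sub_ne_zero.2 (hy.ne (by decide))
  have h₂ : y 0 - y 2 ≠ 0 := sub_ne_zero.2 (hy.ne (by decide))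
  refine Submodule.mem_span_triple.2 ⟨y 1 * y 2 / ((y 0 - y 1) * (y 0 - y 2)),
    -(y 1 + y 2) / ((y 0 - y 1) * (y 0 - y 2)), 1 / ((y 0 - y 1) * (y 0 - y 2)), ?_⟩
  funext j
  fin_cases j <;>
    simp only [eOne, Fin.zero_eta, Fin.mk_one, Fin.reduceFinMk, Matrix.cons_val, Pi.add_apply,
      Pi.pow_apply, Pi.smul_apply, Pi.one_apply, smul_eq_mul] <;>
    field_simp <;> ring

lemma eOne_mem_span_of_self_mem {y u w : V3} (hy : Function.Injective y)
    (h₁ : y ∈ Submodule.span ℝ {1, u, w}) (h₂ : y ^ 2 ∈ Submodule.span ℝ {1, u, w}) :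
    eOne ∈ Submodule.span ℝ {1, u, w} := by
  refine Submodule.span_le.2 ?_ (eOne_mem_span_one_self_sq hy)
  simp only [Set.insert_subset_iff, Set.singleton_subset_iff, SetLike.mem_coe]
  exact ⟨Submodule.subset_span (by simp), h₁, h₂⟩

lemma pos_of_cubic_eq_zero {a b c s : ℝ} (ha : 0 < a) (hb : 0 < b) (hc : 0 < c)
    (hs : s ^ 3 - a * s ^ 2 + b * s - c = 0) : 0 < s := by
  by_contra! hs₀
  nlinarith [mul_nonpos_of_nonpos_of_nonneg hs₀ (sq_nonneg s),
    mul_nonneg ha.le (sq_nonneg s), mul_nonpos_of_nonneg_of_nonpos hb.le hs₀]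

lemma mulSet_mono (a : V3) {S T : Set V3} (h : S ⊆ T) : mulSet a S ⊆ mulSet a T :=
  Set.image_mono h

lemma mulSet_inter_nonempty {a b x z : V3} {S T : Set V3} (hx : x ∈ S) (hz : z ∈ T)
    (h : a * x = b * z) : (mulSet a S ∩ mulSet b T).Nonempty :=
  ⟨a * x, ⟨x, hx, rfl⟩, z, hz, h.symm⟩

lemma inv_mul_eq_mul_inv_mul {p q a b c : V3} (hp : IsPos p) (hq : IsPos q)
    (h : b * p * c = q * a) : p⁻¹ * a = b * q⁻¹ * c := by
  funext j
  have hj := congrFun h j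
  have hpj := (hp j).ne'
  have hqj := (hq j).ne'
  simp only [Pi.mul_apply, Pi.inv_apply] at hj ⊢
  field_simp
  linear_combination -hj

def G₁ (y : V3) : V3 := fun j => -96 * y j ^ 2 + 152 * y j + 113

def G₂ (y : V3) : V3 := fun j => 160 * y j ^ 2 + 32 * y j - 31

def Gπ (y : V3) : V3 := fun j => 192 * y j ^ 2 - 488 * y j + 177

section Counterexample

variable {y : V3}

lemma isPos_G₁ (hroot : ∀ j, 2 * y j ^ 3 - 4 * y j ^ 2 - y j + 1 = 0) : IsPos (G₁ y) :=
  fun j => pos_of_cubic_eq_zero (a := 163) (b := 419) (c := 1) (by norm_num) (by norm_num)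
    (by norm_num) <| by
      unfold G₁
      linear_combination (-591104 - 304128 * y j + 1216512 * y j ^ 2 - 442368 * y j ^ 3) *
        hroot j

lemma isPos_G₂ (hroot : ∀ j, 2 * y j ^ 3 - 4 * y j ^ 2 - y j + 1 = 0) : IsPos (G₂ y) :=
  fun j => pos_of_cubic_eq_zero (a := 771) (b := 8963) (c := 1) (by norm_num) (by norm_num)
    (by norm_num) <| by
      unfold G₂
      linear_combination (-1048576 + 860160 * y j + 5324800 * y j ^ 2 + 2048000 * y j ^ 3) *
        hroot j

lemma isPos_Gπ (hroot : ∀ j, 2 * y j ^ 3 - 4 * y j ^ 2 - y j + 1 = 0) : IsPos (Gπ y) :=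
  fun j => pos_of_cubic_eq_zero (a := 515) (b := 5347) (c := 12769) (by norm_num) (by norm_num)
    (by norm_num) <| by
      unfold Gπ
      linear_combination
        (-9655552 + 30836736 * y j - 19906560 * y j ^ 2 + 3538944 * y j ^ 3) * hroot j

lemma eOne_mem_span_G₁ (hroot : ∀ j, 2 * y j ^ 3 - 4 * y j ^ 2 - y j + 1 = 0)
    (hy : Function.Injective y) : eOne ∈ Submodule.span ℝ {1, G₁ y, G₁ y * G₂ y} := by
  refine eOne_mem_span_of_self_mem hy (Submodule.mem_span_triple.2
    ⟨-1213 / 2200, -1 / 100, 3 / 2200, funext fun j => ?_⟩) (Submodule.mem_span_triple.2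
    ⟨669 / 2200, -21 / 800, 19 / 8800, funext fun j => ?_⟩) <;>
  simp only [G₁, G₂, Pi.add_apply, Pi.mul_apply, Pi.pow_apply, Pi.smul_apply, Pi.one_apply,
    smul_eq_mul]
  · linear_combination (-1776 / 275 - 576 / 55 * y j) * hroot j
  · linear_combination (-2812 / 275 - 912 / 55 * y j) * hroot j

lemma eOne_mem_span_G₂ (hroot : ∀ j, 2 * y j ^ 3 - 4 * y j ^ 2 - y j + 1 = 0)
    (hy : Function.Injective y) : eOne ∈ Submodule.span ℝ {1, G₂ y, G₂ y * G₁ y} := by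
  refine eOne_mem_span_of_self_mem hy (Submodule.mem_span_triple.2
    ⟨-5483 / 9944, 1 / 452, 5 / 9944, funext fun j => ?_⟩) (Submodule.mem_span_triple.2
    ⟨12093 / 39776, 21 / 3616, -1 / 9944, funext fun j => ?_⟩) <;>
  simp only [G₁, G₂, Pi.add_apply, Pi.mul_apply, Pi.pow_apply, Pi.smul_apply, Pi.one_apply,
    smul_eq_mul]
  · linear_combination (-2960 / 1243 - 4800 / 1243 * y j) * hroot j
  · linear_combination (592 / 1243 + 960 / 1243 * y j) * hroot j

lemma inv_Gπ_mem_coneB (hroot : ∀ j, 2 * y j ^ 3 - 4 * y j ^ 2 - y j + 1 = 0) :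
    (Gπ y)⁻¹ ∈ coneB (G₁ y) (G₂ y) := by
  refine ⟨6954 / 3511475, 266 / 319225, 251 / 3511475, by norm_num, by norm_num, by norm_num,
    funext fun j => (eq_inv_of_mul_eq_one_left ?_).symm⟩
  simp only [G₁, G₂, Gπ, Pi.add_apply, Pi.mul_apply, Pi.smul_apply, Pi.one_apply, smul_eq_mul]
  linear_combination (-99385472 / 3511475 + 17724928 / 319225 * y j +
    64770048 / 319225 * y j ^ 2 - 74022912 / 702295 * y j ^ 3) * hroot j

lemma mulSet_coneB_inter_nonempty_mul_inv
    (hroot : ∀ j, 2 * y j ^ 3 - 4 * y j ^ 2 - y j + 1 = 0) :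
    (mulSet (Gπ y)⁻¹ (coneB (G₁ y) (G₂ y)) ∩
      mulSet (G₁ y * (G₂ y)⁻¹) (coneB (G₂ y) (G₁ y))).Nonempty := by
  let α : V3 := (1 : ℝ) • 1 + (1 : ℝ) • G₁ y + (1 / 10000 : ℝ) • (G₁ y * G₂ y)
  let β : V3 := (219617 / 3174373400 : ℝ) • 1 + (381867729 / 1803621250 : ℝ) • G₂ y +
    (60617457 / 158718670000 : ℝ) • (G₂ y * G₁ y)
  have key : G₁ y * Gπ y * β = G₂ y * α := by
    funext j
    simp only [α, β, G₁, G₂, Gπ, Pi.add_apply, Pi.mul_apply, Pi.smul_apply, Pi.one_apply,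
      smul_eq_mul]
    linear_combination (-13563832176808 / 87786875 + 1952539290949568 / 9919916875 * y j +
      7914121539295232 / 9919916875 * y j ^ 2 - 2414019065266176 / 9919916875 * y j ^ 3 -
      1881534829142016 / 9919916875 * y j ^ 4 + 107260892872704 / 1983983375 * y j ^ 5) *
      hroot j
  exact mulSet_inter_nonempty (x := α) (z := β) ⟨_, _, _, one_pos, one_pos, by norm_num, rfl⟩
    ⟨_, _, _, by norm_num, by norm_num, by norm_num, rfl⟩
    (inv_mul_eq_mul_inv_mul (isPos_Gπ hroot) (isPos_G₂ hroot) key)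

lemma mulSet_coneB_inter_nonempty_inv (hroot : ∀ j, 2 * y j ^ 3 - 4 * y j ^ 2 - y j + 1 = 0) :
    (mulSet (Gπ y)⁻¹ (coneB (G₁ y) (G₂ y)) ∩ mulSet (G₂ y)⁻¹ (coneB (G₂ y) (G₁ y))).Nonempty := by
  let α : V3 := (1 : ℝ) • 1 + (43 / 100 : ℝ) • G₁ y + (1 / 1000000 : ℝ) • (G₁ y * G₂ y)
  let β : V3 := (2571 / 45090531250 : ℝ) • 1 + (1718440853 / 1442897000000 : ℝ) • G₂ y +
    (42639098059 / 360724250000 : ℝ) • (G₂ y * G₁ y)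
  have key : 1 * Gπ y * β = G₂ y * α := by
    funext j
    simp only [α, β, G₁, G₂, Gπ, Pi.add_apply, Pi.mul_apply, Pi.smul_apply, Pi.one_apply,
      smul_eq_mul]
    linear_combination (-1617838829129086 / 22545265625 +
      2431272345089912 / 22545265625 * y j + 7564539733076032 / 22545265625 * y j ^ 2 -
      785918314699008 / 4509053125 * y j ^ 3) * hroot j
  exact mulSet_inter_nonempty (x := α) (z := β) ⟨_, _, _, one_pos, by norm_num, by norm_num, rfl⟩
    ⟨_, _, _, by norm_num, by norm_num, by norm_num, rfl⟩
    (by simpa only [one_mul] using inv_mul_eq_mul_inv_mul (isPos_Gπ hroot) (isPos_G₂ hroot) key)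

end Counterexample

/-- counterexample of the appendix: for the cubic field
`F = ℚ(y)` with `2y³ − 4y² − y + 1 = 0`, embedded in `ℝ³` via its three real
embeddings `y ↦ y j`, the elements `g₁ = −96y² + 152y + 113`,
`g₂ = 160y² + 32y − 31` and `π = 192y² − 488y + 177` are totally positive,
`π⁻¹` lies in the Shintani domain `D = C̄_{e₁}([g₁∣g₂]) ∪ C̄_{e₁}([g₂∣g₁])`, both
`π⁻¹D ∩ g₁g₂⁻¹D` and `π⁻¹D ∩ g₂⁻¹D` are nonempty, and in particular Tsosie's
translation property fails. -/
theorem stmt19 (y : Fin 3 → ℝ)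
    (hroot : ∀ j, 2 * y j ^ 3 - 4 * y j ^ 2 - y j + 1 = 0)
    (hinj : Function.Injective y)
    (g₁ g₂ π : V3)
    (hg₁ : g₁ = fun j => -96 * y j ^ 2 + 152 * y j + 113)
    (hg₂ : g₂ = fun j => 160 * y j ^ 2 + 32 * y j - 31)
    (hπ : π = fun j => 192 * y j ^ 2 - 488 * y j + 177) :
    IsPos g₁ ∧ IsPos g₂ ∧ IsPos π ∧
    π⁻¹ ∈ Bbar g₁ g₂ ∧
    (mulSet π⁻¹ (Bbar g₁ g₂) ∩ mulSet (g₁ * g₂⁻¹) (Bbar g₁ g₂)).Nonempty ∧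
    (mulSet π⁻¹ (Bbar g₁ g₂) ∩ mulSet g₂⁻¹ (Bbar g₁ g₂)).Nonempty ∧
    ¬ (∀ m₁ m₂ : ℤ,
        (mulSet (fun j => g₁ j ^ m₁ * g₂ j ^ m₂) (Bbar g₁ g₂) ∩
          mulSet π⁻¹ (Bbar g₁ g₂)).Nonempty →
        (m₁ = 0 ∨ m₁ = 1) ∧ (m₂ = 0 ∨ m₂ = 1)) := by
  obtain rfl : g₁ = G₁ y := hg₁
  obtain rfl : g₂ = G₂ y := hg₂
  obtain rfl : π = Gπ y := hπ
  have h₁ : coneB (G₁ y) (G₂ y) ⊆ Bbar (G₁ y) (G₂ y) :=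
    (coneB_subset_coneBbar (eOne_mem_span_G₁ hroot hinj)).trans subset_union_left
  have h₂ : coneB (G₂ y) (G₁ y) ⊆ Bbar (G₁ y) (G₂ y) :=
    (coneB_subset_coneBbar (eOne_mem_span_G₂ hroot hinj)).trans subset_union_right
  have hW₁ := (mulSet_coneB_inter_nonempty_mul_inv hroot).mono
    (inter_subset_inter (mulSet_mono _ h₁) (mulSet_mono _ h₂))
  have hW₂ := (mulSet_coneB_inter_nonempty_inv hroot).mono
    (inter_subset_inter (mulSet_mono _ h₁) (mulSet_mono _ h₂))
  refine ⟨isPos_G₁ hroot, isPos_G₂ hroot, isPos_Gπ hroot, h₁ (inv_Gπ_mem_coneB hroot), hW₁, hW₂,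
    fun H => ?_⟩
  have hε : (fun j => G₁ y j ^ (1 : ℤ) * G₂ y j ^ (-1 : ℤ)) = G₁ y * (G₂ y)⁻¹ := by
    funext j
    simp [zpow_neg]
  have := (H 1 (-1) (by rwa [hε, inter_comm])).2
  norm_num at this
end
end
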